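/- arXiv:2109.00944 — 4 statements merged into one kernel-verified Lean document; each statement's English description precedes it below -/
import Mathlib

section
/- Let Φ be an irreducible crystallographic root system, S ⊆ Π containing all short simple roots, and β ∈ Φ. Then all roots in Φ_{S,β} = {γ ∈ Φ : c_α(γ)=c_α(β) ∀α∈S} have the same length. -/
open scoped RealInnerProductSpace
attribute [local instance] Classical.propDecidable

variable {E : Type*} [NormedAddCommGroup E] [InnerProductSpace ℝ E] [FiniteDimensional ℝ E]

/-- A finite reduced crystallographic root system spanning `E`. -/
structure IsRootSystem (Φ : Finset E) : Prop where
  nonzero : ∀ γ ∈ Φ, γ ≠ (0 : E)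
  span_top : Submodule.span ℝ (Φ : Set E) = ⊤
  reduced : ∀ γ ∈ Φ, ∀ t : ℝ, t • γ ∈ Φ → t = 1 ∨ t = -1
  reflect : ∀ γ ∈ Φ, ∀ δ ∈ Φ, δ - (2 * ⟪δ, γ⟫ / ⟪γ, γ⟫) • γ ∈ Φ
  cry : ∀ γ ∈ Φ, ∀ δ ∈ Φ, ∃ n : ℤ, 2 * ⟪δ, γ⟫ / ⟪γ, γ⟫ = (n : ℝ)

/-- `Δ` is a simple system (base) for `Φ`, and `c γ a` is the coordinate of `γ`
on the simple root `a`. -/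
structure IsBase (Φ Δ : Finset E) (c : E → E → ℝ) : Prop where
  subset : Δ ⊆ Φ
  indep : LinearIndependent ℝ (fun x : (Δ : Set E) => (x : E))
  repr : ∀ γ ∈ Φ, γ = ∑ a ∈ Δ, c γ a • a
  int : ∀ γ ∈ Φ, ∀ a ∈ Δ, ∃ n : ℤ, c γ a = (n : ℝ)
  sign : ∀ γ ∈ Φ, (∀ a ∈ Δ, 0 ≤ c γ a) ∨ (∀ a ∈ Δ, c γ a ≤ 0)

/-- Irreducibility: no splitting into two nonempty mutually orthogonal parts. -/
def IsIrredSys (Φ : Finset E) : Prop :=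
  ∀ s : Set E, s ⊆ (Φ : Set E) → (∀ x ∈ s, ∀ y ∈ (Φ : Set E) \ s, ⟪x, y⟫ = 0) →
    s = ∅ ∨ s = (Φ : Set E)

/-- `Φ_{S,β}`: roots whose coordinates on every simple root of `S` agree with those of `β`. -/
def lev (Φ : Finset E) (c : E → E → ℝ) (S : Finset E) (β : E) : Set E :=
  {γ | γ ∈ Φ ∧ ∀ a ∈ S, c γ a = c β a}

/-!
Every simple root outside `S` has maximal length. If the roots `γ ≠ γ'` agree on `S`, then
`0 < ‖γ - γ'‖²` lets us assume `0 < ⟪γ, γ - γ'⟫`, so some simple root `b ∉ S` has `⟪γ, b⟫` of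
the sign `ε` of `c γ b - c γ' b`. Since `b` is long, the Cartan integer of `γ` against `ε • b`
is `1`, so `γ - ε • b` is a root of the same length as `γ`, one step closer to `γ'` in
coordinates. The descent stops either at `γ'`, or at `γ = ε • b`; in the latter case all
`S`-coordinates of `γ` and `γ'` vanish, and the same descent towards `0` shows that both roots
are long.
-/

section

omit [FiniteDimensional ℝ E]

open Finset

def IsLongRoot (Φ : Finset E) (γ : E) : Prop :=
  ∀ δ ∈ Φ, ‖δ‖ ≤ ‖γ‖

theorem exists_sign_abs_sub_add_one {x y : ℝ} (hx : ∃ n : ℤ, x = n) (hxy : 0 < x * y) :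
    ∃ ε : ℝ, (ε = 1 ∨ ε = -1) ∧ |x - ε| + 1 = |x| ∧ 0 < ε * y := by
  obtain ⟨n, rfl⟩ := hx
  rcases pos_and_pos_or_neg_and_neg_of_mul_pos hxy with ⟨hn, hy⟩ | ⟨hn, hy⟩
  · have : (1 : ℝ) ≤ n := by exact_mod_cast (show (0 : ℤ) < n by exact_mod_cast hn)
    exact ⟨1, Or.inl rfl, by rw [abs_of_nonneg (by linarith), abs_of_pos hn]; ring, by linarith⟩
  · have hn' : n < 0 := by exact_mod_cast hn
    have : (n : ℝ) ≤ -1 := by exact_mod_cast (show n ≤ -1 by omega)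
    exact ⟨-1, Or.inr rfl, by rw [abs_of_nonpos (by linarith), abs_of_neg hn]; ring,
      by linarith⟩

namespace IsRootSystem

variable {Φ : Finset E} {γ δ : E}

theorem inner_self_pos (hΦ : IsRootSystem Φ) (hγ : γ ∈ Φ) : 0 < ⟪γ, γ⟫ :=
  real_inner_self_pos.mpr (hΦ.nonzero γ hγ)

theorem neg_mem (hΦ : IsRootSystem Φ) (hγ : γ ∈ Φ) : -γ ∈ Φ := by
  have h := hΦ.reflect γ hγ γ hγ
  rwa [mul_div_assoc, div_self (hΦ.inner_self_pos hγ).ne', mul_one, two_smul,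
    sub_add_cancel_left] at h

theorem smul_mem_of_sign (hΦ : IsRootSystem Φ) (hγ : γ ∈ Φ) {ε : ℝ} (hε : ε = 1 ∨ ε = -1) :
    ε • γ ∈ Φ ∧ ‖ε • γ‖ = ‖γ‖ := by
  rcases hε with rfl | rfl <;> simp [hγ, hΦ.neg_mem hγ]

/-- Strict Cauchy–Schwarz: reducedness excludes positive multiples of `δ` other than `δ`. -/
theorem inner_lt_norm_mul (hΦ : IsRootSystem Φ) (hγ : γ ∈ Φ) (hδ : δ ∈ Φ) (hne : γ ≠ δ) :
    ⟪γ, δ⟫ < ‖γ‖ * ‖δ‖ := by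
  rw [inner_lt_norm_mul_iff_real]
  intro h
  have hδ0 : ‖δ‖ ≠ 0 := norm_ne_zero_iff.mpr (hΦ.nonzero δ hδ)
  have hγδ : γ = (‖γ‖ / ‖δ‖) • δ := by
    rw [div_eq_inv_mul, mul_smul, ← h, smul_smul, inv_mul_cancel₀ hδ0, one_smul]
  rcases hΦ.reduced δ hδ _ (hγδ ▸ hγ) with h1 | h1
  · exact hne (by rw [hγδ, h1, one_smul])
  · have : 0 ≤ ‖γ‖ / ‖δ‖ := by positivity
    linarith

/-- The Cartan integer `2⟪γ, δ⟫ / ⟪δ, δ⟫` lies strictly between `0` and `2`. -/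
theorem two_mul_inner_div_eq_one (hΦ : IsRootSystem Φ) (hγ : γ ∈ Φ) (hδ : δ ∈ Φ)
    (hlen : ‖γ‖ ≤ ‖δ‖) (hne : γ ≠ δ) (hpos : 0 < ⟪γ, δ⟫) :
    2 * ⟪γ, δ⟫ / ⟪δ, δ⟫ = 1 := by
  obtain ⟨n, hn⟩ := hΦ.cry δ hδ γ hγ
  have hδδ := hΦ.inner_self_pos hδ
  have hn0 : (0 : ℝ) < n := hn ▸ by positivity
  have hn2 : (n : ℝ) < 2 := by
    rw [← hn, div_lt_iff₀ hδδ, real_inner_self_eq_norm_mul_norm]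
    nlinarith [hΦ.inner_lt_norm_mul hγ hδ hne, norm_nonneg δ]
  have hn1 : n = 1 := by
    have : 0 < n := by exact_mod_cast hn0
    have : n < 2 := by exact_mod_cast hn2
    omega
  rw [hn, hn1, Int.cast_one]

theorem sub_mem_and_norm_sub_eq (hΦ : IsRootSystem Φ) (hγ : γ ∈ Φ) (hδ : δ ∈ Φ)
    (hlen : ‖γ‖ ≤ ‖δ‖) (hne : γ ≠ δ) (hpos : 0 < ⟪γ, δ⟫) :
    γ - δ ∈ Φ ∧ ‖γ - δ‖ = ‖γ‖ := by
  have hcartan := hΦ.two_mul_inner_div_eq_one hγ hδ hlen hne hpos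
  have hrefl := hΦ.reflect δ hδ γ hγ
  rw [hcartan, one_smul] at hrefl
  refine ⟨hrefl, ?_⟩
  have h2 : 2 * ⟪γ, δ⟫ = ‖δ‖ ^ 2 := by
    rwa [div_eq_one_iff_eq (hΦ.inner_self_pos hδ).ne', real_inner_self_eq_norm_sq] at hcartan
  have hsq : ‖γ - δ‖ ^ 2 = ‖γ‖ ^ 2 := by rw [norm_sub_sq_real]; linarith
  exact (sq_eq_sq₀ (norm_nonneg _) (norm_nonneg _)).mp hsq

end IsRootSystem

namespace IsBase

variable {Φ Δ S : Finset E} {c : E → E → ℝ} {γ γ' δ : E}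

theorem coeff_eq_of_eq_sum (hB : IsBase Φ Δ c) (hγ : γ ∈ Φ) {f : E → ℝ}
    (hf : γ = ∑ b ∈ Δ, f b • b) : ∀ b ∈ Δ, c γ b = f b := by
  have hzero : ∑ b ∈ Δ, (c γ b - f b) • b = 0 := by
    simp only [sub_smul, sum_sub_distrib, ← hB.repr γ hγ, ← hf, sub_self]
  have hind : LinearIndepOn ℝ id (Δ : Set E) := hB.indep
  intro b hb
  exact sub_eq_zero.mp (linearIndepOn_finset_iff.mp hind _ hzero b hb)

theorem coeff_smul (hB : IsBase Φ Δ c) {a : E} (ha : a ∈ Δ) {ε : ℝ} (hε : ε • a ∈ Φ) :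
    ∀ b ∈ Δ, c (ε • a) b = if b = a then ε else 0 :=
  hB.coeff_eq_of_eq_sum hε (by simp [ite_smul, sum_ite_eq', ha])

theorem coeff_sub (hB : IsBase Φ Δ c) (hγ : γ ∈ Φ) (hδ : δ ∈ Φ) (hγδ : γ - δ ∈ Φ) :
    ∀ b ∈ Δ, c (γ - δ) b = c γ b - c δ b :=
  hB.coeff_eq_of_eq_sum hγδ (by simp only [sub_smul, sum_sub_distrib, ← hB.repr _ hγ,
    ← hB.repr _ hδ])

theorem sum_coeff_mul_inner (hB : IsBase Φ Δ c) (hγ : γ ∈ Φ) (x : E) :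
    ∑ b ∈ Δ, c γ b * ⟪x, b⟫ = ⟪x, γ⟫ := by
  conv_rhs => rw [hB.repr γ hγ]
  simp only [inner_sum, real_inner_smul_right]

theorem sum_coeff_sub_mul_inner (hB : IsBase Φ Δ c) (hγ : γ ∈ Φ) (hγ' : γ' ∈ Φ) (x : E) :
    ∑ b ∈ Δ, (c γ b - c γ' b) * ⟪x, b⟫ = ⟪x, γ - γ'⟫ := by
  simp only [sub_mul, sum_sub_distrib, hB.sum_coeff_mul_inner hγ, hB.sum_coeff_mul_inner hγ',
    inner_sub_right]

/-- One step of the descent towards the integral coordinate vector `f`; the first alternative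
is the case where `γ` is itself `±b` for the simple root `b` one would move along. -/
theorem long_or_exists_closer (hB : IsBase Φ Δ c) (hΦ : IsRootSystem Φ) (hS : S ⊆ Δ)
    (hlong : ∀ b ∈ Δ, b ∉ S → IsLongRoot Φ b) (hγ : γ ∈ Φ) {f : E → ℝ}
    (hf : ∀ b ∈ Δ, ∃ n : ℤ, f b = n) (hfS : ∀ s ∈ S, c γ s = f s)
    (hpos : 0 < ∑ b ∈ Δ, (c γ b - f b) * ⟪γ, b⟫) :
    ((∀ s ∈ S, c γ s = 0) ∧ IsLongRoot Φ γ) ∨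
      ∃ γ' ∈ Φ, ‖γ'‖ = ‖γ‖ ∧ (∀ s ∈ S, c γ' s = f s) ∧
        ∑ b ∈ Δ, |c γ' b - f b| + 1 = ∑ b ∈ Δ, |c γ b - f b| := by
  obtain ⟨b, hb, hbpos⟩ : ∃ b ∈ Δ, 0 < (c γ b - f b) * ⟪γ, b⟫ :=
    exists_lt_of_sum_lt (by simpa using hpos)
  have hbS : b ∉ S := fun h => by simp [hfS b h] at hbpos
  have hint : ∃ n : ℤ, c γ b - f b = n := by
    obtain ⟨m, hm⟩ := hB.int γ hγ b hb
    obtain ⟨n, hn⟩ := hf b hb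
    exact ⟨m - n, by rw [hm, hn]; push_cast; ring⟩
  obtain ⟨ε, hε, habs, hεpos⟩ := exists_sign_abs_sub_add_one hint hbpos
  obtain ⟨hεb, hεb_norm⟩ := hΦ.smul_mem_of_sign (hB.subset hb) hε
  have hcoeff_εb := hB.coeff_smul hb hεb
  have hne_b : ∀ s ∈ S, s ≠ b := fun s hs => ne_of_mem_of_not_mem hs hbS
  by_cases hγb : γ = ε • b
  · subst hγb
    refine Or.inl ⟨fun s hs => by rw [hcoeff_εb s (hS hs), if_neg (hne_b s hs)], ?_⟩
    intro δ hδ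
    rw [hεb_norm]
    exact hlong b hb hbS δ hδ
  · right
    obtain ⟨hmem, hnorm⟩ := hΦ.sub_mem_and_norm_sub_eq hγ hεb
      (hεb_norm ▸ hlong b hb hbS γ hγ) hγb (by rwa [real_inner_smul_right])
    have hcoeff : ∀ a ∈ Δ, c (γ - ε • b) a = c γ a - if a = b then ε else 0 := fun a ha => by
      rw [hB.coeff_sub hγ hεb hmem a ha, hcoeff_εb a ha]
    refine ⟨_, hmem, hnorm, fun s hs => ?_, ?_⟩
    · rw [hcoeff s (hS hs), if_neg (hne_b s hs), sub_zero, hfS s hs]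
    · rw [← add_sum_erase _ _ hb, ← add_sum_erase _ _ hb, hcoeff b hb, if_pos rfl,
        sum_congr rfl fun a ha => by
          rw [hcoeff a (mem_of_mem_erase ha), if_neg (ne_of_mem_erase ha), sub_zero],
        sub_right_comm]
      linarith

theorem isLongRoot_of_coeff_eq_zero (hB : IsBase Φ Δ c) (hΦ : IsRootSystem Φ) (hS : S ⊆ Δ)
    (hlong : ∀ b ∈ Δ, b ∉ S → IsLongRoot Φ b) (hγ : γ ∈ Φ) (hγS : ∀ s ∈ S, c γ s = 0) :
    IsLongRoot Φ γ := by
  obtain ⟨N, hN⟩ := exists_nat_gt (∑ b ∈ Δ, |c γ b|)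
  induction N generalizing γ with
  | zero =>
    rw [Nat.cast_zero] at hN
    exact absurd hN (not_lt.mpr (by positivity))
  | succ N ih =>
    have hpos : 0 < ∑ b ∈ Δ, (c γ b - (0 : E → ℝ) b) * ⟪γ, b⟫ := by
      simpa [hB.sum_coeff_mul_inner hγ] using hΦ.inner_self_pos hγ
    rcases hB.long_or_exists_closer hΦ hS hlong hγ (fun _ _ => ⟨0, by simp⟩)
      (by simpa using hγS) hpos with ⟨-, h⟩ | ⟨γ', hγ', hnorm, hγ'S, hsum⟩
    · exact h
    · simp only [Pi.zero_apply, sub_zero] at hγ'S hsum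
      push_cast at hN
      intro δ hδ
      rw [← hnorm]
      exact ih hγ' hγ'S (by linarith) δ hδ

theorem norm_eq_of_coeff_eq (hB : IsBase Φ Δ c) (hΦ : IsRootSystem Φ) (hS : S ⊆ Δ)
    (hlong : ∀ b ∈ Δ, b ∉ S → IsLongRoot Φ b) (hγ : γ ∈ Φ) (hγ' : γ' ∈ Φ)
    (hγγ' : ∀ s ∈ S, c γ s = c γ' s) : ‖γ‖ = ‖γ'‖ := by
  obtain ⟨N, hN⟩ := exists_nat_gt (∑ b ∈ Δ, |c γ b - c γ' b|)
  induction N generalizing γ γ' with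
  | zero =>
    rw [Nat.cast_zero] at hN
    exact absurd hN (not_lt.mpr (by positivity))
  | succ N ih =>
    rcases eq_or_ne γ γ' with rfl | hne
    · rfl
    wlog hpos : 0 < ⟪γ, γ - γ'⟫ generalizing γ γ'
    · have hsq : 0 < ⟪γ - γ', γ - γ'⟫ := real_inner_self_pos.mpr (sub_ne_zero.mpr hne)
      have hpos' : 0 < ⟪γ', γ' - γ⟫ := by
        rw [inner_sub_left] at hsq
        rw [← neg_sub, inner_neg_right]
        linarith
      refine (this hγ' hγ (fun s hs => (hγγ' s hs).symm) ?_ hne.symm hpos').symm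
      simpa only [abs_sub_comm] using hN
    rcases hB.long_or_exists_closer hΦ hS hlong hγ (hB.int γ' hγ') hγγ'
      (by rwa [hB.sum_coeff_sub_mul_inner hγ hγ']) with
      ⟨hγS, hγlong⟩ | ⟨γ'', hγ'', hnorm, hγ''S, hsum⟩
    · have hγ'long := hB.isLongRoot_of_coeff_eq_zero hΦ hS hlong hγ'
        fun s hs => (hγγ' s hs).symm.trans (hγS s hs)
      exact le_antisymm (hγ'long γ hγ) (hγlong γ' hγ')
    · push_cast at hN
      exact hnorm ▸ ih hγ'' hγ' hγ''S (by linarith)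

end IsBase

end

theorem stmt12_general (Φ Δ : Finset E) (c : E → E → ℝ)
    (hΦ : IsRootSystem Φ) (hB : IsBase Φ Δ c)
    (S : Finset E) (hS : S ⊆ Δ)
    (hshort : ∀ a ∈ Δ, (∃ δ ∈ Φ, ‖a‖ < ‖δ‖) → a ∈ S)
    (β : E) :
    ∀ γ ∈ lev Φ c S β, ∀ γ' ∈ lev Φ c S β, ‖γ‖ = ‖γ'‖ := by
  have hlong : ∀ b ∈ Δ, b ∉ S → IsLongRoot Φ b := fun b hb hbS δ hδ =>
    not_lt.mp fun h => hbS (hshort b hb ⟨δ, hδ, h⟩)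
  rintro γ ⟨hγ, hγβ⟩ γ' ⟨hγ', hγ'β⟩
  exact hB.norm_eq_of_coeff_eq hΦ hS hlong hγ hγ' fun s hs =>
    (hγβ s hs).trans (hγ'β s hs).symm

/-- If `S` contains every short simple root, then all roots in `Φ_{S,β}` have the same
length. -/
theorem stmt12 (Φ Δ : Finset E) (c : E → E → ℝ)
    (hΦ : IsRootSystem Φ) (hB : IsBase Φ Δ c) (hirr : IsIrredSys Φ)
    (S : Finset E) (hS : S ⊆ Δ)
    (hshort : ∀ a ∈ Δ, (∃ δ ∈ Φ, ‖a‖ < ‖δ‖) → a ∈ S)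
    (β : E) (hβ : β ∈ Φ) :
    ∀ γ ∈ lev Φ c S β, ∀ γ' ∈ lev Φ c S β, ‖γ‖ = ‖γ'‖ :=
  stmt12_general Φ Δ c hΦ hB S hS hshort β
end

section
/- Let Φ be an irreducible crystallographic root system, S ⊆ Π, β ∈ Φ⁺ with supp(β) ∩ S ≠ ∅. Then Φ_{S,β} contains only short roots if and only if min Φ_{S,β} is short. Moreover, if min Φ_{S,β} is long and the connected component of min Φ_{S,β} in the Dynkin diagram of (Π\S) ∪ {min Φ_{S,β}} contains a short simple root, then Φ_{S,β} contains both long and short roots. -/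
open scoped RealInnerProductSpace
attribute [local instance] Classical.propDecidable

variable {E : Type*} [NormedAddCommGroup E] [InnerProductSpace ℝ E] [FiniteDimensional ℝ E]

/-- The root-poset order: `x ≤ y` iff `y - x` is a nonnegative linear combination of
positive roots. -/
def rootLe (Φ Δ : Finset E) (c : E → E → ℝ) (x y : E) : Prop :=
  ∃ f : E → ℝ, (∀ γ, 0 ≤ f γ) ∧
    y - x = ∑ γ ∈ Φ.filter (fun γ => ∀ a ∈ Δ, 0 ≤ c γ a), f γ • γ

set_option linter.unusedSectionVars false in
lemma aux_inner_self_pos {x : E} (hx : x ≠ 0) : 0 < ⟪x, x⟫ := by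
  rw [real_inner_self_eq_norm_mul_norm]
  have h : 0 < ‖x‖ := norm_pos_iff.mpr hx
  positivity

set_option linter.unusedSectionVars false in
lemma aux_base_unique {Φ Δ : Finset E} {c : E → E → ℝ} (hB : IsBase Φ Δ c)
    {g g' : E → ℝ} (h : ∑ a ∈ Δ, g a • a = ∑ a ∈ Δ, g' a • a) :
    ∀ a ∈ Δ, g a = g' a := by
  have h0 : ∑ a ∈ Δ, (g a - g' a) • a = 0 := by
    simp only [sub_smul, Finset.sum_sub_distrib, h, sub_self]
  have hind : LinearIndependent ℝ (fun x : {x // x ∈ Δ} => (x : E)) := hB.indep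
  have h1 : ∑ x ∈ Δ.attach, (g x.1 - g' x.1) • (x.1 : E) = 0 := by
    rw [Finset.sum_attach Δ (fun a => (g a - g' a) • a)]; exact h0
  intro a ha
  have := linearIndependent_iff'.mp hind Δ.attach (fun x => g x.1 - g' x.1) h1
      ⟨a, ha⟩ (Finset.mem_attach _ _)
  have h2 : g a - g' a = 0 := this
  linarith

set_option linter.unusedSectionVars false in
lemma aux_norm_reflect {x y : E} (hx : x ≠ 0) :
    ‖y - (2 * ⟪y, x⟫ / ⟪x, x⟫) • x‖ = ‖y‖ := by
  have hxx : ⟪x, x⟫ ≠ 0 := inner_self_ne_zero.mpr hx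
  set t : ℝ := 2 * ⟪y, x⟫ / ⟪x, x⟫ with ht
  have htx : t * ⟪x, x⟫ = 2 * ⟪y, x⟫ := div_mul_cancel₀ _ hxx
  have hinner : ⟪y - t • x, y - t • x⟫ = ⟪y, y⟫ := by
    rw [inner_sub_left, inner_sub_right, inner_sub_right, real_inner_smul_left,
      real_inner_smul_left, real_inner_smul_right, real_inner_smul_right,
      real_inner_comm y x]
    have h5 : t * (t * ⟪x, x⟫) = t * (2 * ⟪y, x⟫) := by rw [htx]
    linarith
  have h1 := real_inner_self_eq_norm_mul_norm (y - t • x)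
  have h2 := real_inner_self_eq_norm_mul_norm y
  rw [h1, h2] at hinner
  exact (mul_self_inj (norm_nonneg _) (norm_nonneg _)).mp hinner

set_option linter.unusedSectionVars false in
lemma aux_pq3 {Φ : Finset E} (hΦ : IsRootSystem Φ) {x y : E} (hx : x ∈ Φ) (hy : y ∈ Φ)
    (hnp : ∀ t : ℝ, y ≠ t • x) :
    ∃ p q : ℤ, 2 * ⟪y, x⟫ / ⟪x, x⟫ = p ∧ 2 * ⟪y, x⟫ / ⟪y, y⟫ = q ∧ p * q ≤ 3 := by
  have hx0 : x ≠ 0 := hΦ.nonzero x hx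
  have hy0 : y ≠ 0 := hΦ.nonzero y hy
  have hxx : 0 < ⟪x, x⟫ := aux_inner_self_pos hx0
  have hyy : 0 < ⟪y, y⟫ := aux_inner_self_pos hy0
  obtain ⟨p, hp⟩ := hΦ.cry x hx y hy
  obtain ⟨q, hq⟩ := hΦ.cry y hy x hx
  rw [real_inner_comm y x] at hq
  refine ⟨p, q, hp, hq, ?_⟩
  have hz : ⟪x, x⟫ • y - ⟪y, x⟫ • x ≠ 0 := by
    intro h
    have h2 : ⟪x, x⟫ • y = ⟪y, x⟫ • x := sub_eq_zero.mp h
    have h3 : y = (⟪x, x⟫⁻¹ * ⟪y, x⟫) • x := by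
      rw [mul_smul, ← h2, ← mul_smul, inv_mul_cancel₀ (ne_of_gt hxx), one_smul]
    exact hnp _ h3
  have hzz : 0 < ⟪⟪x, x⟫ • y - ⟪y, x⟫ • x, ⟪x, x⟫ • y - ⟪y, x⟫ • x⟫ :=
    aux_inner_self_pos hz
  rw [inner_sub_left, inner_sub_right, inner_sub_right, real_inner_smul_left,
    real_inner_smul_left, real_inner_smul_left, real_inner_smul_left,
    real_inner_smul_right, real_inner_smul_right, real_inner_smul_right,
    real_inner_smul_right, real_inner_comm y x] at hzz
  have hCS : ⟪y, x⟫ * ⟪y, x⟫ < ⟪x, x⟫ * ⟪y, y⟫ := by nlinarith [hzz, hxx, hyy]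
  have hpr : (p : ℝ) * ⟪x, x⟫ = 2 * ⟪y, x⟫ := by
    rw [← hp, div_mul_cancel₀ _ (ne_of_gt hxx)]
  have hqr : (q : ℝ) * ⟪y, y⟫ = 2 * ⟪y, x⟫ := by
    rw [← hq, div_mul_cancel₀ _ (ne_of_gt hyy)]
  have h4 : ((p : ℝ) * q) * (⟪x, x⟫ * ⟪y, y⟫) = 4 * (⟪y, x⟫ * ⟪y, x⟫) := by
    linear_combination ((q : ℝ) * ⟪y, y⟫) * hpr + (2 * ⟪y, x⟫) * hqr
  have hlt : (p : ℝ) * q < 4 := by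
    nlinarith [h4, hCS, mul_pos hxx hyy]
  have : (p : ℤ) * q < 4 := by exact_mod_cast hlt
  omega

/-- `Φ_{S,β}` contains only short roots iff its minimum is short; moreover if the
minimum is long and its connected component in the Dynkin diagram of
`(Π \ S) ∪ {min Φ_{S,β}}` contains a short simple root, then `Φ_{S,β}` contains both
long and short roots.  Here "short" means strictly shorter than some root of `Φ` and
"long" means of maximal length, and the Dynkin diagram has an edge between two distinct
simple roots iff they are not orthogonal. -/
theorem stmt13 (Φ Δ : Finset E) (c : E → E → ℝ)
    (hΦ : IsRootSystem Φ) (hB : IsBase Φ Δ c) (hirr : IsIrredSys Φ)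
    (S : Finset E) (hS : S ⊆ Δ) (β : E) (hβ : β ∈ Φ)
    (hβpos : ∀ a ∈ Δ, 0 ≤ c β a) (hsupp : ∃ a ∈ S, c β a ≠ 0)
    (m : E) (hm : m ∈ lev Φ c S β ∧ ∀ γ ∈ lev Φ c S β, rootLe Φ Δ c m γ) :
    ((∀ γ ∈ lev Φ c S β, ∃ δ ∈ Φ, ‖γ‖ < ‖δ‖) ↔ (∃ δ ∈ Φ, ‖m‖ < ‖δ‖)) ∧
    ((∀ δ ∈ Φ, ‖δ‖ ≤ ‖m‖) →
      (∃ b ∈ insert m ((Δ : Set E) \ (S : Set E)), (∃ δ ∈ Φ, ‖b‖ < ‖δ‖) ∧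
        Relation.ReflTransGen
          (fun x y => x ∈ insert m ((Δ : Set E) \ (S : Set E)) ∧
            y ∈ insert m ((Δ : Set E) \ (S : Set E)) ∧ x ≠ y ∧ ⟪x, y⟫ ≠ 0) m b) →
      (∃ γ ∈ lev Φ c S β, ∀ δ ∈ Φ, ‖δ‖ ≤ ‖γ‖) ∧
      (∃ γ ∈ lev Φ c S β, ∃ δ ∈ Φ, ‖γ‖ < ‖δ‖)) := by
  obtain ⟨hmlev, hmmin⟩ := hm
  have hmΦ : m ∈ Φ := hmlev.1
  have hmS : ∀ a ∈ S, c m a = c β a := hmlev.2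
  have hm0 : m ≠ 0 := hΦ.nonzero m hmΦ
  -- simple-root sums
  have simple_sum : ∀ x ∈ Δ, ∑ a ∈ Δ, (if a = x then (1 : ℝ) else 0) • a = x := by
    intro x hx
    simp only [ite_smul, one_smul, zero_smul]
    rw [Finset.sum_ite_eq' Δ x (fun a => a)]
    simp [hx]
  have coord_eq : ∀ γ ∈ Φ, ∀ g : E → ℝ, γ = ∑ a ∈ Δ, g a • a → ∀ a ∈ Δ, c γ a = g a := by
    intro γ hγ g hg a ha
    exact aux_base_unique hB (by rw [← hB.repr γ hγ, ← hg]) a ha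
  have coord_simple : ∀ x, x ∈ Δ → ∀ a ∈ Δ, c x a = if a = x then 1 else 0 := by
    intro x hx a ha
    exact coord_eq x (hB.subset hx) _ (simple_sum x hx).symm a ha
  -- difference representation
  have diffrep : ∀ γ ∈ Φ, ∀ δ ∈ Φ, γ - δ = ∑ a ∈ Δ, (c γ a - c δ a) • a := by
    intro γ hγ δ hδ
    have h1 : ∑ a ∈ Δ, (c γ a - c δ a) • a
        = (∑ a ∈ Δ, c γ a • a) - ∑ a ∈ Δ, c δ a • a := by
      rw [← Finset.sum_sub_distrib]
      exact Finset.sum_congr rfl fun a _ => sub_smul _ _ _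
    rw [h1, ← hB.repr γ hγ, ← hB.repr δ hδ]
  -- negation
  have neg_mem : ∀ γ ∈ Φ, -γ ∈ Φ := by
    intro γ hγ
    have h := hΦ.reflect γ hγ γ hγ
    have h2 : 2 * ⟪γ, γ⟫ / ⟪γ, γ⟫ = (2 : ℝ) := by
      rw [mul_div_assoc, div_self (inner_self_ne_zero.mpr (hΦ.nonzero γ hγ)), mul_one]
    rw [h2] at h
    have h3 : γ - (2 : ℝ) • γ = -γ := by
      rw [two_smul]; abel
    rwa [h3] at h
  -- coordinates are ≥ those of m on lev
  have coordNN : ∀ γ ∈ lev Φ c S β, ∀ a ∈ Δ, 0 ≤ c γ a - c m a := by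
    intro γ hγ a ha
    obtain ⟨f, hf, hsum⟩ := hmmin γ hγ
    have hrw : γ - m = ∑ a ∈ Δ,
        (∑ γ' ∈ Φ.filter (fun γ => ∀ a ∈ Δ, 0 ≤ c γ a), f γ' * c γ' a) • a := by
      rw [hsum]
      calc ∑ γ' ∈ Φ.filter (fun γ => ∀ a ∈ Δ, 0 ≤ c γ a), f γ' • γ'
          = ∑ γ' ∈ Φ.filter (fun γ => ∀ a ∈ Δ, 0 ≤ c γ a),
              ∑ a ∈ Δ, (f γ' * c γ' a) • a := by
            refine Finset.sum_congr rfl fun γ' hγ' => ?_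
            have h1 := hB.repr γ' (Finset.mem_filter.mp hγ').1
            calc f γ' • γ' = f γ' • ∑ a ∈ Δ, c γ' a • a := by rw [← h1]
              _ = ∑ a ∈ Δ, (f γ' * c γ' a) • a := by
                  rw [Finset.smul_sum]
                  exact Finset.sum_congr rfl fun a _ => (smul_smul _ _ _)
        _ = ∑ a ∈ Δ, ∑ γ' ∈ Φ.filter (fun γ => ∀ a ∈ Δ, 0 ≤ c γ a),
              (f γ' * c γ' a) • a := Finset.sum_comm
        _ = ∑ a ∈ Δ,
              (∑ γ' ∈ Φ.filter (fun γ => ∀ a ∈ Δ, 0 ≤ c γ a), f γ' * c γ' a) • a := by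
            exact Finset.sum_congr rfl fun a _ => (Finset.sum_smul).symm
    have h2 : γ - m = ∑ a ∈ Δ, (c γ a - c m a) • a := diffrep γ hγ.1 m hmΦ
    have h3 := aux_base_unique hB (h2.symm.trans hrw) a ha
    rw [h3]
    refine Finset.sum_nonneg fun γ' hγ' => ?_
    have h4 := Finset.mem_filter.mp hγ'
    exact mul_nonneg (hf γ') (h4.2 a ha)
  -- coordinates of reflections
  have coordCombo : ∀ γ ∈ Φ, ∀ δ ∈ Φ, ∀ t : ℝ, ∀ x ∈ Δ, γ = δ - t • x →
      ∀ a ∈ Δ, c γ a = c δ a - t * (if a = x then 1 else 0) := by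
    intro γ hγ δ hδ t x hx hrel a ha
    refine coord_eq γ hγ (fun a => c δ a - t * (if a = x then 1 else 0)) ?_ a ha
    have h1 : ∑ a ∈ Δ, (c δ a - t * (if a = x then 1 else 0)) • a
        = (∑ a ∈ Δ, c δ a • a) - t • ∑ a ∈ Δ, (if a = x then (1 : ℝ) else 0) • a := by
      rw [Finset.smul_sum, ← Finset.sum_sub_distrib]
      refine Finset.sum_congr rfl fun a _ => ?_
      rw [sub_smul, smul_smul]
    rw [hrel, h1, ← hB.repr δ hδ, simple_sum x hx]
  -- lev is closed under subtracting multiples of simple roots not in S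
  have lev_sub : ∀ γ ∈ lev Φ c S β, ∀ t : ℝ, ∀ x, x ∈ Δ → x ∉ S →
      γ - t • x ∈ Φ → γ - t • x ∈ lev Φ c S β := by
    intro γ hγ t x hxΔ hxS hmem
    refine ⟨hmem, fun a ha => ?_⟩
    have h1 := coordCombo (γ - t • x) hmem γ hγ.1 t x hxΔ rfl a (hS ha)
    have hax : a ≠ x := fun h => hxS (h ▸ ha)
    rw [h1, if_neg hax, mul_zero, sub_zero]
    exact hγ.2 a ha
  -- the key lemma : every element of lev is at most as long as m
  have key : ∀ n : ℕ, ∀ γ, γ ∈ lev Φ c S β →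
      (∑ a ∈ Δ, (c γ a - c m a)) ≤ (n : ℝ) → ‖γ‖ ≤ ‖m‖ := by
    intro n
    induction n with
    | zero =>
      intro γ hγ hH
      have hnn := coordNN γ hγ
      have hz : ∑ a ∈ Δ, (c γ a - c m a) = 0 := by
        have := Finset.sum_nonneg hnn
        simp only [Nat.cast_zero] at hH
        linarith
      have hcz := (Finset.sum_eq_zero_iff_of_nonneg hnn).mp hz
      have hγm : γ = m := by
        have h1 : γ - m = 0 := by
          rw [diffrep γ hγ.1 m hmΦ]
          refine Finset.sum_eq_zero fun a ha => ?_
          rw [hcz a ha, zero_smul]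
        exact sub_eq_zero.mp h1
      rw [hγm]
    | succ n ih =>
      intro γ hγ hH
      by_cases hγm : γ = m
      · rw [hγm]
      have hγΦ : γ ∈ Φ := hγ.1
      have hγ0 : γ ≠ 0 := hΦ.nonzero γ hγΦ
      have hdrep : γ - m = ∑ a ∈ Δ, (c γ a - c m a) • a := diffrep γ hγΦ m hmΦ
      by_cases hcase : 0 < ⟪γ, γ - m⟫
      · -- descend by a simple reflection
        have hsum : ⟪γ, γ - m⟫ = ∑ a ∈ Δ, (c γ a - c m a) * ⟪γ, a⟫ := by
          conv_lhs => rw [hdrep]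
          rw [inner_sum]
          exact Finset.sum_congr rfl fun a _ => real_inner_smul_right _ _ _
        have hex : ∃ a ∈ Δ, 0 < (c γ a - c m a) * ⟪γ, a⟫ := by
          by_contra hcon
          push_neg at hcon
          have : ⟪γ, γ - m⟫ ≤ 0 := hsum ▸ Finset.sum_nonpos hcon
          linarith
        obtain ⟨a, ha, hterm⟩ := hex
        have hka := coordNN γ hγ a ha
        have hipa : 0 < ⟪γ, a⟫ := by
          rcases lt_or_ge 0 ⟪γ, a⟫ with h | h
          · exact h
          · nlinarith
        have haS : a ∉ S := by
          intro haS
          have h1 : c γ a = c β a := hγ.2 a haS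
          have h2 : c m a = c β a := hmS a haS
          nlinarith [hterm]
        have haΦ : a ∈ Φ := hB.subset ha
        have ha0 : a ≠ 0 := hΦ.nonzero a haΦ
        obtain ⟨tz, htz⟩ := hΦ.cry a haΦ γ hγΦ
        set t : ℝ := 2 * ⟪γ, a⟫ / ⟪a, a⟫ with htdef
        have htpos : 0 < t := div_pos (by linarith) (aux_inner_self_pos ha0)
        have ht1 : (1 : ℝ) ≤ t := by
          have : (0 : ℤ) < tz := by
            have : (0 : ℝ) < (tz : ℝ) := htz ▸ htpos
            exact_mod_cast this
          have h1 : (1 : ℝ) ≤ (tz : ℝ) := by exact_mod_cast this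
          rw [htz]; exact h1
        have hγ'Φ : γ - t • a ∈ Φ := hΦ.reflect a haΦ γ hγΦ
        have hγ'lev : γ - t • a ∈ lev Φ c S β := lev_sub γ hγ t a ha haS hγ'Φ
        have hcoords := coordCombo (γ - t • a) hγ'Φ γ hγΦ t a ha rfl
        have hH' : ∑ a' ∈ Δ, (c (γ - t • a) a' - c m a')
            = (∑ a' ∈ Δ, (c γ a' - c m a')) - t := by
          have h1 : ∀ a' ∈ Δ, c (γ - t • a) a' - c m a'
              = (c γ a' - c m a') - t * (if a' = a then 1 else 0) := by
            intro a' ha'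
            rw [hcoords a' ha']; ring
          rw [Finset.sum_congr rfl h1, Finset.sum_sub_distrib, ← Finset.mul_sum,
            Finset.sum_ite_eq' Δ a (fun _ => (1 : ℝ)), if_pos ha, mul_one]
        have hnorm : ‖γ - t • a‖ = ‖γ‖ := aux_norm_reflect ha0
        have hle : ∑ a' ∈ Δ, (c (γ - t • a) a' - c m a') ≤ (n : ℝ) := by
          rw [hH']
          push_cast at hH ⊢
          linarith
        rw [← hnorm]
        exact ih (γ - t • a) hγ'lev hle
      · -- Cauchy-Schwarz case
        push_neg at hcase
        have h1 : ⟪γ, γ⟫ ≤ ⟪γ, m⟫ := by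
          rw [inner_sub_right] at hcase
          linarith
        have h2 : ⟪γ, m⟫ ≤ ‖γ‖ * ‖m‖ := real_inner_le_norm γ m
        have h3 : ⟪γ, γ⟫ = ‖γ‖ * ‖γ‖ := real_inner_self_eq_norm_mul_norm γ
        have h4 : 0 < ‖γ‖ := norm_pos_iff.mpr hγ0
        nlinarith
  have big : ∀ γ ∈ lev Φ c S β, ‖γ‖ ≤ ‖m‖ := by
    intro γ hγ
    exact key (Nat.ceil (∑ a ∈ Δ, (c γ a - c m a))) γ hγ (Nat.le_ceil _)
  constructor
  · constructor
    · intro h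
      exact h m ⟨hmΦ, hmS⟩
    · rintro ⟨δ, hδ, hlt⟩ γ hγ
      exact ⟨δ, hδ, lt_of_le_of_lt (big γ hγ) hlt⟩
  · rintro hlong ⟨b, hbT, ⟨δ0, hδ0, hb0⟩, hwalk⟩
    refine ⟨⟨m, ⟨hmΦ, hmS⟩, hlong⟩, ?_⟩
    -- b is a short simple root distinct from m
    have hbm : b ≠ m := by
      rintro rfl
      exact absurd (hlong δ0 hδ0) (not_le.mpr hb0)
    have hbΔ' : b ∈ (Δ : Set E) \ (S : Set E) := (Set.mem_insert_iff.mp hbT).resolve_left hbm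
    have hbΔ : b ∈ Δ := Finset.mem_coe.mp hbΔ'.1
    have hbS : b ∉ S := fun h => hbΔ'.2 (Finset.mem_coe.mpr h)
    have hbΦ : b ∈ Φ := hB.subset hbΔ
    have hb0' : b ≠ 0 := hΦ.nonzero b hbΦ
    have hbshort : ‖b‖ < ‖m‖ := lt_of_lt_of_le hb0 (hlong δ0 hδ0)
    -- walking the Dynkin diagram
    have good : ∀ x, Relation.ReflTransGen
        (fun x y => x ∈ insert m ((Δ : Set E) \ (S : Set E)) ∧
          y ∈ insert m ((Δ : Set E) \ (S : Set E)) ∧ x ≠ y ∧ ⟪x, y⟫ ≠ 0) m x →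
        ∃ μ, μ ∈ lev Φ c S β ∧ ‖μ‖ = ‖m‖ ∧ ⟪μ, x⟫ ≠ 0 := by
      intro x hx
      induction hx with
      | refl =>
        exact ⟨m, ⟨hmΦ, hmS⟩, rfl, ne_of_gt (aux_inner_self_pos hm0)⟩
      | @tail x y hmx hr ih =>
        obtain ⟨hxT, hyT, hxy, hip⟩ := hr
        obtain ⟨μ, hμlev, hμn, hμx⟩ := ih
        by_cases hxm : x = m
        · exact ⟨m, ⟨hmΦ, hmS⟩, rfl, hxm ▸ hip⟩
        · have hxΔ' : x ∈ (Δ : Set E) \ (S : Set E) :=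
            (Set.mem_insert_iff.mp hxT).resolve_left hxm
          have hxΔ : x ∈ Δ := Finset.mem_coe.mp hxΔ'.1
          have hxS : x ∉ S := fun h => hxΔ'.2 (Finset.mem_coe.mpr h)
          have hxΦ : x ∈ Φ := hB.subset hxΔ
          have hx0 : x ≠ 0 := hΦ.nonzero x hxΦ
          by_cases hμy : ⟪μ, y⟫ ≠ 0
          · exact ⟨μ, hμlev, hμn, hμy⟩
          · push_neg at hμy
            set t : ℝ := 2 * ⟪μ, x⟫ / ⟪x, x⟫ with htdef
            have ht0 : t ≠ 0 := by
              apply div_ne_zero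
              · exact mul_ne_zero two_ne_zero hμx
              · exact inner_self_ne_zero.mpr hx0
            have hμ'Φ : μ - t • x ∈ Φ := hΦ.reflect x hxΦ μ hμlev.1
            refine ⟨μ - t • x, lev_sub μ hμlev t x hxΔ hxS hμ'Φ, ?_, ?_⟩
            · rw [aux_norm_reflect hx0]; exact hμn
            · rw [inner_sub_left, real_inner_smul_left, hμy]
              simpa using mul_ne_zero ht0 hip
    obtain ⟨μ, hμlev, hμn, hμb⟩ := good b hwalk
    have hμΦ : μ ∈ Φ := hμlev.1
    have hμ0 : μ ≠ 0 := hΦ.nonzero μ hμΦ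
    have hμμ : 0 < ⟪μ, μ⟫ := aux_inner_self_pos hμ0
    have hbb : 0 < ⟪b, b⟫ := aux_inner_self_pos hb0'
    have hbμnorm : ‖b‖ < ‖μ‖ := hμn ▸ hbshort
    have hbμ : ⟪b, b⟫ < ⟪μ, μ⟫ := by
      rw [real_inner_self_eq_norm_mul_norm, real_inner_self_eq_norm_mul_norm]
      nlinarith [norm_nonneg b]
    have hnp : ∀ t : ℝ, μ ≠ t • b := by
      intro t ht
      have htb : t • b ∈ Φ := ht ▸ hμΦ
      have hn : ‖μ‖ = |t| * ‖b‖ := by rw [ht, norm_smul, Real.norm_eq_abs]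
      rcases hΦ.reduced b hbΦ t htb with h | h <;> rw [h] at hn <;> simp at hn <;> linarith
    obtain ⟨p, q, hp, hq, hpq⟩ := aux_pq3 hΦ hbΦ hμΦ hnp
    have hipb : ⟪μ, b⟫ ≠ 0 := hμb
    have hpr : (p : ℝ) * ⟪b, b⟫ = 2 * ⟪μ, b⟫ := by
      rw [← hp, div_mul_cancel₀ _ (ne_of_gt hbb)]
    have hqr : (q : ℝ) * ⟪μ, μ⟫ = 2 * ⟪μ, b⟫ := by
      rw [← hq, div_mul_cancel₀ _ (ne_of_gt hμμ)]
    have hq0 : q ≠ 0 := by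
      intro h
      rw [h] at hqr
      push_cast at hqr
      exact hipb (by linarith)
    have hpqpos : 0 < p * q := by
      have h4 : ((p : ℝ) * q) * (⟪b, b⟫ * ⟪μ, μ⟫) = (2 * ⟪μ, b⟫) * (2 * ⟪μ, b⟫) := by
        linear_combination ((q : ℝ) * ⟪μ, μ⟫) * hpr + (2 * ⟪μ, b⟫) * hqr
      have h5 : 0 < (2 * ⟪μ, b⟫) * (2 * ⟪μ, b⟫) := by
        have h5' : 2 * ⟪μ, b⟫ ≠ 0 := mul_ne_zero two_ne_zero hipb
        exact mul_self_pos.mpr h5'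
      have h6 : 0 < (p : ℝ) * q := by
        nlinarith [mul_pos hbb hμμ]
      exact_mod_cast h6
    have habs : |q| < |p| := by
      have h7 : |(p : ℝ)| * ⟪b, b⟫ = |(q : ℝ)| * ⟪μ, μ⟫ := by
        have := congrArg abs (hpr.trans hqr.symm)
        rwa [abs_mul, abs_mul, abs_of_pos hbb, abs_of_pos hμμ] at this
      have h8 : 0 < |(q : ℝ)| := abs_pos.mpr (by exact_mod_cast hq0)
      have h9 : |(q : ℝ)| < |(p : ℝ)| := by nlinarith
      have : |q| < |p| := by
        rw [← Int.cast_abs, ← Int.cast_abs] at h9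
        exact_mod_cast h9
      exact this
    have hqq : q = 1 ∨ q = -1 := by
      have h10 : q * q < p * q := by
        calc q * q = |q| * |q| := (abs_mul_abs_self q).symm
          _ < |p| * |q| := by
              exact mul_lt_mul_of_pos_right habs (abs_pos.mpr hq0)
          _ = |p * q| := (abs_mul p q).symm
          _ = p * q := abs_of_pos hpqpos
      have h11 : q * q < 3 := lt_of_lt_of_le h10 hpq
      by_contra hcon
      push_neg at hcon
      have h12 : 2 ≤ q ∨ q ≤ -2 := by omega
      rcases h12 with h | h <;> nlinarith
    rcases hqq with h1 | h1
    · -- q = 1 : take μ - b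
      have hscal : 2 * ⟪b, μ⟫ / ⟪μ, μ⟫ = (1 : ℝ) := by
        rw [real_inner_comm μ b, hq, h1]; norm_num
      have hrefl : b - (2 * ⟪b, μ⟫ / ⟪μ, μ⟫) • μ ∈ Φ := hΦ.reflect μ hμΦ b hbΦ
      have hbmuΦ : b - μ ∈ Φ := by rwa [hscal, one_smul] at hrefl
      have hmubΦ : μ - b ∈ Φ := by
        have h2 := neg_mem (b - μ) hbmuΦ
        rwa [neg_sub] at h2
      have hlev : μ - b ∈ lev Φ c S β := by
        refine ⟨hmubΦ, fun a haS => ?_⟩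
        have haΔ := hS haS
        have h3 := coord_eq (μ - b) hmubΦ _ (diffrep μ hμΦ b hbΦ) a haΔ
        rw [h3, coord_simple b hbΔ a haΔ, if_neg (show a ≠ b from fun h => hbS (h ▸ haS)), sub_zero]
        exact hμlev.2 a haS
      have hnorm : ‖μ - b‖ = ‖b‖ := by
        have h2 : ‖b - (2 * ⟪b, μ⟫ / ⟪μ, μ⟫) • μ‖ = ‖b‖ := aux_norm_reflect hμ0
        rw [hscal, one_smul] at h2
        rw [← neg_sub b μ, norm_neg]
        exact h2
      exact ⟨μ - b, hlev, δ0, hδ0, by rw [hnorm]; exact hb0⟩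
    · -- q = -1 : take b + μ
      have hscal : 2 * ⟪b, μ⟫ / ⟪μ, μ⟫ = (-1 : ℝ) := by
        rw [real_inner_comm μ b, hq, h1]; norm_num
      have hrefl : b - (2 * ⟪b, μ⟫ / ⟪μ, μ⟫) • μ ∈ Φ := hΦ.reflect μ hμΦ b hbΦ
      have hsimp : b - (-1 : ℝ) • μ = b + μ := by
        rw [neg_one_smul]; abel
      have hbμΦ : b + μ ∈ Φ := by rwa [hscal, hsimp] at hrefl
      have haddrep : b + μ = ∑ a ∈ Δ, (c b a + c μ a) • a := by
        have h1' : ∑ a ∈ Δ, (c b a + c μ a) • a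
            = (∑ a ∈ Δ, c b a • a) + ∑ a ∈ Δ, c μ a • a := by
          rw [← Finset.sum_add_distrib]
          exact Finset.sum_congr rfl fun a _ => add_smul _ _ _
        rw [h1', ← hB.repr b hbΦ, ← hB.repr μ hμΦ]
      have hlev : b + μ ∈ lev Φ c S β := by
        refine ⟨hbμΦ, fun a haS => ?_⟩
        have haΔ := hS haS
        have h3 := coord_eq (b + μ) hbμΦ _ haddrep a haΔ
        rw [h3, coord_simple b hbΔ a haΔ, if_neg (show a ≠ b from fun h => hbS (h ▸ haS)), zero_add]
        exact hμlev.2 a haS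
      have hnorm : ‖b + μ‖ = ‖b‖ := by
        have h2 : ‖b - (2 * ⟪b, μ⟫ / ⟪μ, μ⟫) • μ‖ = ‖b‖ := aux_norm_reflect hμ0
        rwa [hscal, hsimp] at h2
      exact ⟨b + μ, hlev, δ0, hδ0, by rw [hnorm]; exact hb0⟩
end

section
/- Let Φ be irreducible and α ∈ Π. The simple root α and the maximum μ of the set Φ_{α,1} = {γ ∈ Φ : c_α(γ)=1} (in the root poset) have the same length, and this is the maximal length among roots in Φ_{α,1}. Moreover, for every irreducible component Ψ of Φ⟨Π\{α}⟩ and every γ ∈ Φ_{α,1} of this maximal length, γ is not orthogonal to Ψ. -/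
open scoped RealInnerProductSpace
attribute [local instance] Classical.propDecidable

variable {E : Type*} [NormedAddCommGroup E] [InnerProductSpace ℝ E] [FiniteDimensional ℝ E]

/-- Irreducibility of a set of roots: no splitting into two nonempty mutually
orthogonal parts. -/
def IsIrredSet (s : Set E) : Prop :=
  ∀ t : Set E, t ⊆ s → (∀ x ∈ t, ∀ y ∈ s \ t, ⟪x, y⟫ = 0) → t = ∅ ∨ t = s

set_option linter.unusedSectionVars false
set_option maxHeartbeats 1000000

namespace Stmt17Aux

variable {E : Type*} [NormedAddCommGroup E] [InnerProductSpace ℝ E] [FiniteDimensional ℝ E]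
variable {Φ Δ : Finset E} {c : E → E → ℝ} {α : E}

lemma coords_unique (hind : LinearIndependent ℝ (fun x : (Δ : Set E) => (x : E)))
    {g g' : E → ℝ} (h : ∑ a ∈ Δ, g a • a = ∑ a ∈ Δ, g' a • a) :
    ∀ a ∈ Δ, g a = g' a := by
  intro a ha
  have h1 : ∑ x : (Δ : Set E), (g x - g' x) • (x : E) = 0 := by
    rw [Finset.sum_finset_coe (fun b => (g b - g' b) • b) Δ]
    simp only [sub_smul, Finset.sum_sub_distrib, h, sub_self]
  have h2 := linearIndependent_iff'.mp hind Finset.univ (fun x => g x.1 - g' x.1)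
    (by simpa using h1) ⟨a, by simpa using ha⟩ (Finset.mem_univ _)
  simp only [sub_eq_zero] at h2
  exact h2

/-- coordinates of a root from any representation -/
lemma coords_eq (hB : IsBase Φ Δ c) {γ : E} (hγ : γ ∈ Φ) {g : E → ℝ}
    (h : γ = ∑ a ∈ Δ, g a • a) : ∀ a ∈ Δ, c γ a = g a :=
  coords_unique hB.indep (by rw [← hB.repr γ hγ, ← h])

lemma indicator_sum {a : E} (ha : a ∈ Δ) (k : ℝ) :
    ∑ b ∈ Δ, (if b = a then k else 0) • b = k • a := by
  rw [show (∑ b ∈ Δ, (if b = a then k else 0) • b) = ∑ b ∈ Δ, (if b = a then k • a else 0) from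
    Finset.sum_congr rfl (by intro b _; split <;> simp_all)]
  simp [Finset.sum_ite_eq' Δ a, ha]

lemma simple_coords (hB : IsBase Φ Δ c) {a : E} (ha : a ∈ Δ) :
    ∀ b ∈ Δ, c a b = if b = a then 1 else 0 := by
  apply coords_eq hB (hB.subset ha)
  rw [indicator_sum ha 1, one_smul]

lemma inner_self_pos' (hΦ : IsRootSystem Φ) {γ : E} (hγ : γ ∈ Φ) : (0:ℝ) < ⟪γ, γ⟫ := by
  rw [real_inner_self_eq_norm_sq]
  exact pow_pos (norm_pos_iff.mpr (hΦ.nonzero γ hγ)) 2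

lemma neg_mem (hΦ : IsRootSystem Φ) {γ : E} (hγ : γ ∈ Φ) : -γ ∈ Φ := by
  have h0 : ⟪γ, γ⟫ ≠ (0:ℝ) := inner_self_ne_zero.mpr (hΦ.nonzero γ hγ)
  have h2 : 2 * ⟪γ, γ⟫ / ⟪γ, γ⟫ = 2 := by
    rw [mul_div_assoc, div_self h0, mul_one]
  have := hΦ.reflect γ hγ γ hγ
  rw [h2] at this
  convert this using 1
  module

lemma neg_coords (hΦ : IsRootSystem Φ) (hB : IsBase Φ Δ c) {γ : E} (hγ : γ ∈ Φ) :
    ∀ b ∈ Δ, c (-γ) b = -(c γ b) := by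
  apply coords_eq hB (neg_mem hΦ hγ)
  rw [show (∑ a ∈ Δ, (-(c γ a)) • a) = -∑ a ∈ Δ, c γ a • a by
    simp [Finset.sum_neg_distrib, neg_smul]]
  rw [← hB.repr γ hγ]

lemma slice_coords_nonneg (hB : IsBase Φ Δ c) (hα : α ∈ Δ) {γ : E} (hγ : γ ∈ Φ)
    (h1 : c γ α = 1) : ∀ a ∈ Δ, 0 ≤ c γ a := by
  rcases hB.sign γ hγ with h | h
  · exact h
  · have := h α hα; rw [h1] at this; linarith

lemma inner_repr (hB : IsBase Φ Δ c) {γ : E} (hγ : γ ∈ Φ) (z : E) :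
    ⟪z, γ⟫ = ∑ b ∈ Δ, c γ b * ⟪z, b⟫ := by
  conv_lhs => rw [hB.repr γ hγ]
  rw [inner_sum]
  exact Finset.sum_congr rfl fun b _ => real_inner_smul_right z b (c γ b)

lemma sub_repr (hB : IsBase Φ Δ c) {x y : E} (hx : x ∈ Φ) (hy : y ∈ Φ) :
    y - x = ∑ b ∈ Δ, (c y b - c x b) • b := by
  conv_lhs => rw [hB.repr y hy, hB.repr x hx]
  simp [sub_smul, Finset.sum_sub_distrib]

/-- If two roots have negative inner product and are not opposite, their sum is a root. -/
lemma root_add (hΦ : IsRootSystem Φ) {γ δ : E} (hγ : γ ∈ Φ) (hδ : δ ∈ Φ)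
    (hneg : ⟪γ, δ⟫ < 0) (hne : γ ≠ -δ) : γ + δ ∈ Φ := by
  have hγγ := inner_self_pos' hΦ hγ
  have hδδ := inner_self_pos' hΦ hδ
  obtain ⟨n, hn⟩ := hΦ.cry δ hδ γ hγ
  obtain ⟨m, hm⟩ := hΦ.cry γ hγ δ hδ
  rw [real_inner_comm γ δ] at hm
  -- hn : 2 * ⟪γ, δ⟫ / ⟪δ, δ⟫ = n ;  hm : 2 * ⟪γ, δ⟫ / ⟪γ, γ⟫ = m
  have hn0 : (n:ℝ) < 0 := by
    rw [← hn]; exact div_neg_of_neg_of_pos (by linarith) hδδ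
  have hm0 : (m:ℝ) < 0 := by
    rw [← hm]; exact div_neg_of_neg_of_pos (by linarith) hγγ
  have hcs : ⟪γ, δ⟫ * ⟪γ, δ⟫ ≤ ⟪γ, γ⟫ * ⟪δ, δ⟫ := real_inner_mul_inner_self_le γ δ
  have hprod : (n:ℝ) * m ≤ 4 := by
    rw [← hn, ← hm, div_mul_div_comm, div_le_iff₀ (by positivity)]
    nlinarith
  have hne4 : (n:ℝ) * m ≠ 4 := by
    intro h4
    have heq : ⟪γ, δ⟫ * ⟪γ, δ⟫ = ⟪γ, γ⟫ * ⟪δ, δ⟫ := by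
      have h5 : (2 * ⟪γ, δ⟫ / ⟪δ, δ⟫) * (2 * ⟪γ, δ⟫ / ⟪γ, γ⟫) = 4 := by rw [hn, hm]; exact h4
      rw [div_mul_div_comm] at h5
      field_simp at h5
      nlinarith
    have hδt : δ = (⟪γ, δ⟫ / ⟪γ, γ⟫) • γ := by
      have hz : ⟪δ - (⟪γ, δ⟫ / ⟪γ, γ⟫) • γ, δ - (⟪γ, δ⟫ / ⟪γ, γ⟫) • γ⟫ = 0 := by
        have expand : ⟪δ - (⟪γ, δ⟫ / ⟪γ, γ⟫) • γ, δ - (⟪γ, δ⟫ / ⟪γ, γ⟫) • γ⟫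
            = ⟪δ, δ⟫ - 2 * (⟪γ, δ⟫ / ⟪γ, γ⟫) * ⟪γ, δ⟫
              + (⟪γ, δ⟫ / ⟪γ, γ⟫)^2 * ⟪γ, γ⟫ := by
          simp only [inner_sub_left, inner_sub_right, real_inner_smul_left,
            real_inner_smul_right, real_inner_comm γ δ]
          ring
        rw [expand]
        field_simp
        nlinarith [heq]
      have := inner_self_eq_zero.mp hz
      rw [sub_eq_zero] at this
      exact this
    rcases hΦ.reduced γ hγ (⟪γ, δ⟫ / ⟪γ, γ⟫) (by rw [← hδt]; exact hδ) with h1 | h1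
    · have : ⟪γ, δ⟫ = ⟪γ, γ⟫ := by
        field_simp at h1; linarith [h1]
      linarith
    · apply hne
      rw [hδt, h1, neg_smul, one_smul, neg_neg]
  have key : n = -1 ∨ m = -1 := by
    have hn1 : n < 0 := by exact_mod_cast hn0
    have hm1 : m < 0 := by exact_mod_cast hm0
    by_contra hc
    push_neg at hc
    have hn2 : n ≤ -2 := by omega
    have hm2 : m ≤ -2 := by omega
    have h4' : (4:ℤ) ≤ n * m := by nlinarith
    have h4r : (4:ℝ) ≤ (n:ℝ) * m := by exact_mod_cast h4'
    exact hne4 (le_antisymm hprod h4r)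
  rcases key with h | h
  · have := hΦ.reflect δ hδ γ hγ
    rw [hn, h] at this
    convert this using 1
    push_cast
    module
  · have := hΦ.reflect γ hγ δ hδ
    rw [real_inner_comm γ δ, hm, h] at this
    convert this using 1
    push_cast
    module


lemma reflect_coords (hΦ : IsRootSystem Φ) (hB : IsBase Φ Δ c) {x a : E}
    (hx : x ∈ Φ) (ha : a ∈ Δ) :
    ∀ b ∈ Δ, c (x - (2*⟪x,a⟫/⟪a,a⟫) • a) b
      = c x b - (if b = a then 2*⟪x,a⟫/⟪a,a⟫ else 0) := by
  apply coords_eq hB (hΦ.reflect a (hB.subset ha) x hx)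
  calc x - (2*⟪x,a⟫/⟪a,a⟫) • a
      = (∑ b ∈ Δ, c x b • b) - ∑ b ∈ Δ, (if b = a then 2*⟪x,a⟫/⟪a,a⟫ else 0) • b := by
        rw [← hB.repr x hx, indicator_sum ha]
    _ = ∑ b ∈ Δ, (c x b - (if b = a then 2*⟪x,a⟫/⟪a,a⟫ else 0)) • b := by
        simp [sub_smul, Finset.sum_sub_distrib]

lemma reflect_norm (hΦ : IsRootSystem Φ) (hB : IsBase Φ Δ c) {x a : E}
    (hx : x ∈ Φ) (ha : a ∈ Δ) :
    ‖x - (2*⟪x,a⟫/⟪a,a⟫) • a‖ = ‖x‖ := by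
  have haa : (0:ℝ) < ⟪a, a⟫ := inner_self_pos' hΦ (hB.subset ha)
  have hsq : ⟪x - (2*⟪x,a⟫/⟪a,a⟫) • a, x - (2*⟪x,a⟫/⟪a,a⟫) • a⟫ = ⟪x, x⟫ := by
    simp only [inner_sub_left, inner_sub_right, real_inner_smul_left, real_inner_smul_right,
      real_inner_comm a x]
    field_simp
    ring
  have h2 : ‖x - (2*⟪x,a⟫/⟪a,a⟫) • a‖^2 = ‖x‖^2 := by
    rw [← real_inner_self_eq_norm_sq, ← real_inner_self_eq_norm_sq, hsq]
  calc ‖x - (2*⟪x,a⟫/⟪a,a⟫) • a‖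
      = Real.sqrt (‖x - (2*⟪x,a⟫/⟪a,a⟫) • a‖^2) := (Real.sqrt_sq (norm_nonneg _)).symm
    _ = Real.sqrt (‖x‖^2) := by rw [h2]
    _ = ‖x‖ := Real.sqrt_sq (norm_nonneg _)

lemma rootLe_coord (hB : IsBase Φ Δ c) {x y : E} (hx : x ∈ Φ) (hy : y ∈ Φ)
    (h : rootLe Φ Δ c x y) : ∀ b ∈ Δ, c x b ≤ c y b := by
  obtain ⟨f, hf, hsum⟩ := h
  set P := Φ.filter (fun γ => ∀ a ∈ Δ, 0 ≤ c γ a) with hP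
  have hswap : ∑ γ ∈ P, f γ • γ = ∑ b ∈ Δ, (∑ γ ∈ P, f γ * c γ b) • b := by
    calc ∑ γ ∈ P, f γ • γ = ∑ γ ∈ P, ∑ b ∈ Δ, (f γ * c γ b) • b := by
          apply Finset.sum_congr rfl; intro γ hγ
          rw [hP, Finset.mem_filter] at hγ
          rw [show f γ • γ = f γ • ∑ b ∈ Δ, c γ b • b from
            congrArg (fun v => f γ • v) (hB.repr γ hγ.1)]
          rw [Finset.smul_sum]
          exact Finset.sum_congr rfl fun b _ => by rw [smul_smul]
      _ = ∑ b ∈ Δ, (∑ γ ∈ P, f γ * c γ b) • b := by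
          rw [Finset.sum_comm]
          exact Finset.sum_congr rfl fun b _ => by rw [Finset.sum_smul]
  have hyx : y - x = ∑ b ∈ Δ, (c y b - c x b) • b := sub_repr hB hx hy
  have huniq := coords_unique hB.indep (g := fun b => c y b - c x b)
    (g' := fun b => ∑ γ ∈ P, f γ * c γ b) (by rw [← hyx, hsum, hswap])
  intro b hb
  have h2 := huniq b hb
  have h3 : 0 ≤ ∑ γ ∈ P, f γ * c γ b := Finset.sum_nonneg fun γ hγ =>
    mul_nonneg (hf γ) (by rw [hP, Finset.mem_filter] at hγ; exact hγ.2 b hb)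
  linarith

lemma mu_dominant (hΦ : IsRootSystem Φ) (hB : IsBase Φ Δ c) (hα : α ∈ Δ)
    {μ : E} (hμΦ : μ ∈ Φ) (hμ1 : c μ α = 1)
    (hmax : ∀ γ ∈ Φ, c γ α = 1 → rootLe Φ Δ c γ μ) :
    ∀ a ∈ Δ, a ≠ α → 0 ≤ ⟪μ, a⟫ := by
  intro a ha hane
  by_contra hlt
  push_neg at hlt
  have haΦ := hB.subset ha
  have hαa : ¬ (α = a) := fun h => hane h.symm
  have hcaα : c a α = 0 := by
    rw [simple_coords hB ha α hα]
    simp [hαa]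
  have hμne : μ ≠ -a := by
    intro h
    have h2 := neg_coords hΦ hB haΦ α hα
    rw [← h, hμ1, hcaα] at h2
    norm_num at h2
  have hsum : μ + a ∈ Φ := root_add hΦ hμΦ haΦ hlt hμne
  have hcoords : ∀ b ∈ Δ, c (μ + a) b = c μ b + (if b = a then 1 else 0) := by
    apply coords_eq hB hsum
    calc μ + a = (∑ b ∈ Δ, c μ b • b) + ∑ b ∈ Δ, (if b = a then (1:ℝ) else 0) • b := by
          rw [← hB.repr μ hμΦ, indicator_sum ha 1, one_smul]
      _ = ∑ b ∈ Δ, (c μ b + (if b = a then 1 else 0)) • b := by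
          simp [add_smul, Finset.sum_add_distrib]
  have hc1 : c (μ + a) α = 1 := by
    rw [hcoords α hα]
    simp [hαa, hμ1]
  have hle := rootLe_coord hB hsum hμΦ (hmax _ hsum hc1) a ha
  rw [hcoords a ha] at hle
  simp at hle
  linarith

lemma dominant_le (hΦ : IsRootSystem Φ) (hB : IsBase Φ Δ c) (hα : α ∈ Δ)
    {μ : E} (hμΦ : μ ∈ Φ) (hμ1 : c μ α = 1)
    (hmax : ∀ γ ∈ Φ, c γ α = 1 → rootLe Φ Δ c γ μ)
    {y : E} (hy : y ∈ Φ) (hy1 : c y α = 1)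
    (hdom : ∀ a ∈ Δ, a ≠ α → 0 ≤ ⟪y, a⟫) :
    ‖y‖ ≤ ‖μ‖ ∧ (‖y‖ = ‖μ‖ → y = μ) := by
  have hle := rootLe_coord hB hy hμΦ (hmax y hy hy1)
  have hd : μ - y = ∑ b ∈ Δ, (c μ b - c y b) • b := sub_repr hB hy hμΦ
  have hterm : ∀ z : E, (∀ a ∈ Δ, a ≠ α → 0 ≤ ⟪z, a⟫) → 0 ≤ ⟪z, μ - y⟫ := by
    intro z hz
    rw [hd, inner_sum]
    apply Finset.sum_nonneg
    intro b hb
    rw [real_inner_smul_right]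
    by_cases hbα : b = α
    · subst hbα; rw [hμ1, hy1]; simp
    · exact mul_nonneg (by linarith [hle b hb]) (hz b hb hbα)
  have h1 : 0 ≤ ⟪μ, μ - y⟫ := hterm μ (mu_dominant hΦ hB hα hμΦ hμ1 hmax)
  have h2 : 0 ≤ ⟪y, μ - y⟫ := hterm y hdom
  have hid : ⟪μ, μ - y⟫ + ⟪y, μ - y⟫ = ‖μ‖^2 - ‖y‖^2 := by
    simp only [inner_sub_right, real_inner_self_eq_norm_sq, real_inner_comm y μ]
    ring
  constructor
  · nlinarith [norm_nonneg y, norm_nonneg μ]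
  · intro heq
    rw [heq] at hid
    have h3 : ⟪μ, μ - y⟫ = 0 := by linarith
    have h4 : ⟪y, μ - y⟫ = 0 := by linarith
    have h5 : ⟪μ - y, μ - y⟫ = 0 := by
      rw [inner_sub_left, h3, h4, sub_zero]
    have := inner_self_eq_zero.mp h5
    rw [sub_eq_zero] at this
    exact this.symm

lemma climb_dom (hΦ : IsRootSystem Φ) (hB : IsBase Φ Δ c) (hα : α ∈ Δ)
    (Q : E → Prop)
    (hQ : ∀ x ∈ Φ, c x α = 1 → ∀ a ∈ Δ, a ≠ α → Q x → Q (x - (2*⟪x,a⟫/⟪a,a⟫) • a)) :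
    ∀ n : ℕ, ∀ x ∈ Φ, c x α = 1 → Q x →
      (Φ.filter (fun δ => (∑ b ∈ Δ, c x b) < ∑ b ∈ Δ, c δ b)).card < n →
      ∃ y ∈ Φ, c y α = 1 ∧ Q y ∧ ‖y‖ = ‖x‖ ∧ ∀ a ∈ Δ, a ≠ α → 0 ≤ ⟪y, a⟫ := by
  intro n
  induction n with
  | zero => intro x _ _ _ h; omega
  | succ n ih =>
    intro x hx hx1 hQx hcard
    by_cases hdom : ∀ a ∈ Δ, a ≠ α → 0 ≤ ⟪x, a⟫
    · exact ⟨x, hx, hx1, hQx, rfl, hdom⟩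
    push_neg at hdom
    obtain ⟨a, ha, hane, hlt⟩ := hdom
    have haa : (0:ℝ) < ⟪a, a⟫ := inner_self_pos' hΦ (hB.subset ha)
    have hkneg : 2*⟪x,a⟫/⟪a,a⟫ < 0 := div_neg_of_neg_of_pos (by linarith) haa
    have hx' : x - (2*⟪x,a⟫/⟪a,a⟫) • a ∈ Φ := hΦ.reflect a (hB.subset ha) x hx
    have hco := reflect_coords hΦ hB hx ha
    have hαa : ¬ (α = a) := fun h => hane h.symm
    have hx'1 : c (x - (2*⟪x,a⟫/⟪a,a⟫) • a) α = 1 := by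
      rw [hco α hα]; simp [hαa, hx1]
    have hQx' : Q (x - (2*⟪x,a⟫/⟪a,a⟫) • a) := hQ x hx hx1 a ha hane hQx
    have hnorm : ‖x - (2*⟪x,a⟫/⟪a,a⟫) • a‖ = ‖x‖ := reflect_norm hΦ hB hx ha
    have hht : (∑ b ∈ Δ, c (x - (2*⟪x,a⟫/⟪a,a⟫) • a) b)
        = (∑ b ∈ Δ, c x b) - 2*⟪x,a⟫/⟪a,a⟫ := by
      rw [Finset.sum_congr rfl (fun b hb => hco b hb), Finset.sum_sub_distrib]
      simp [Finset.sum_ite_eq' Δ a, ha]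
    have hhgt : (∑ b ∈ Δ, c x b) < ∑ b ∈ Δ, c (x - (2*⟪x,a⟫/⟪a,a⟫) • a) b := by
      rw [hht]; linarith
    have hsub : Φ.filter (fun δ => (∑ b ∈ Δ, c (x - (2*⟪x,a⟫/⟪a,a⟫) • a) b) < ∑ b ∈ Δ, c δ b)
        ⊂ Φ.filter (fun δ => (∑ b ∈ Δ, c x b) < ∑ b ∈ Δ, c δ b) := by
      rw [Finset.ssubset_def]
      constructor
      · intro δ hδ
        rw [Finset.mem_filter] at *
        exact ⟨hδ.1, lt_trans hhgt hδ.2⟩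
      · intro hsup
        have hmem : (x - (2*⟪x,a⟫/⟪a,a⟫) • a)
            ∈ Φ.filter (fun δ => (∑ b ∈ Δ, c x b) < ∑ b ∈ Δ, c δ b) :=
          Finset.mem_filter.mpr ⟨hx', hhgt⟩
        have h2 := hsup hmem
        rw [Finset.mem_filter] at h2
        exact lt_irrefl _ h2.2
    have hcard' := Finset.card_lt_card hsub
    obtain ⟨y, hy, hy1, hQy, hn, hd⟩ := ih _ hx' hx'1 hQx' (by omega)
    exact ⟨y, hy, hy1, hQy, by rw [hn, hnorm], hd⟩

lemma climb_anti (hΦ : IsRootSystem Φ) (hB : IsBase Φ Δ c) (hα : α ∈ Δ)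
    (Q : E → Prop)
    (hQ : ∀ x ∈ Φ, c x α = 1 → ∀ a ∈ Δ, a ≠ α → Q x → Q (x - (2*⟪x,a⟫/⟪a,a⟫) • a)) :
    ∀ n : ℕ, ∀ x ∈ Φ, c x α = 1 → Q x →
      (Φ.filter (fun δ => (∑ b ∈ Δ, c δ b) < ∑ b ∈ Δ, c x b)).card < n →
      ∃ y ∈ Φ, c y α = 1 ∧ Q y ∧ ‖y‖ = ‖x‖ ∧ ∀ a ∈ Δ, a ≠ α → ⟪y, a⟫ ≤ 0 := by
  intro n
  induction n with
  | zero => intro x _ _ _ h; omega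
  | succ n ih =>
    intro x hx hx1 hQx hcard
    by_cases hdom : ∀ a ∈ Δ, a ≠ α → ⟪x, a⟫ ≤ 0
    · exact ⟨x, hx, hx1, hQx, rfl, hdom⟩
    push_neg at hdom
    obtain ⟨a, ha, hane, hlt⟩ := hdom
    have haa : (0:ℝ) < ⟪a, a⟫ := inner_self_pos' hΦ (hB.subset ha)
    have hkpos : 0 < 2*⟪x,a⟫/⟪a,a⟫ := div_pos (by linarith) haa
    have hx' : x - (2*⟪x,a⟫/⟪a,a⟫) • a ∈ Φ := hΦ.reflect a (hB.subset ha) x hx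
    have hco := reflect_coords hΦ hB hx ha
    have hαa : ¬ (α = a) := fun h => hane h.symm
    have hx'1 : c (x - (2*⟪x,a⟫/⟪a,a⟫) • a) α = 1 := by
      rw [hco α hα]; simp [hαa, hx1]
    have hQx' : Q (x - (2*⟪x,a⟫/⟪a,a⟫) • a) := hQ x hx hx1 a ha hane hQx
    have hnorm : ‖x - (2*⟪x,a⟫/⟪a,a⟫) • a‖ = ‖x‖ := reflect_norm hΦ hB hx ha
    have hht : (∑ b ∈ Δ, c (x - (2*⟪x,a⟫/⟪a,a⟫) • a) b)
        = (∑ b ∈ Δ, c x b) - 2*⟪x,a⟫/⟪a,a⟫ := by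
      rw [Finset.sum_congr rfl (fun b hb => hco b hb), Finset.sum_sub_distrib]
      simp [Finset.sum_ite_eq' Δ a, ha]
    have hhgt : (∑ b ∈ Δ, c (x - (2*⟪x,a⟫/⟪a,a⟫) • a) b) < ∑ b ∈ Δ, c x b := by
      rw [hht]; linarith
    have hsub : Φ.filter (fun δ => (∑ b ∈ Δ, c δ b) < ∑ b ∈ Δ, c (x - (2*⟪x,a⟫/⟪a,a⟫) • a) b)
        ⊂ Φ.filter (fun δ => (∑ b ∈ Δ, c δ b) < ∑ b ∈ Δ, c x b) := by
      rw [Finset.ssubset_def]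
      constructor
      · intro δ hδ
        rw [Finset.mem_filter] at *
        exact ⟨hδ.1, lt_trans hδ.2 hhgt⟩
      · intro hsup
        have hmem : (x - (2*⟪x,a⟫/⟪a,a⟫) • a)
            ∈ Φ.filter (fun δ => (∑ b ∈ Δ, c δ b) < ∑ b ∈ Δ, c x b) :=
          Finset.mem_filter.mpr ⟨hx', hhgt⟩
        have h2 := hsup hmem
        rw [Finset.mem_filter] at h2
        exact lt_irrefl _ h2.2
    have hcard' := Finset.card_lt_card hsub
    obtain ⟨y, hy, hy1, hQy, hn, hd⟩ := ih _ hx' hx'1 hQx' (by omega)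
    exact ⟨y, hy, hy1, hQy, by rw [hn, hnorm], hd⟩

lemma length_le (hΦ : IsRootSystem Φ) (hB : IsBase Φ Δ c) (hα : α ∈ Δ)
    {μ : E} (hμΦ : μ ∈ Φ) (hμ1 : c μ α = 1)
    (hmax : ∀ γ ∈ Φ, c γ α = 1 → rootLe Φ Δ c γ μ)
    {γ : E} (hγ : γ ∈ Φ) (hγ1 : c γ α = 1) : ‖γ‖ ≤ ‖μ‖ := by
  obtain ⟨y, hy, hy1, -, hn, hd⟩ := climb_dom hΦ hB hα (fun _ => True)
    (fun _ _ _ _ _ _ _ => trivial)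
    ((Φ.filter (fun δ => (∑ b ∈ Δ, c γ b) < ∑ b ∈ Δ, c δ b)).card + 1)
    γ hγ hγ1 trivial (Nat.lt_succ_self _)
  rw [← hn]
  exact (dominant_le hΦ hB hα hμΦ hμ1 hmax hy hy1 hd).1

lemma anti_eq_alpha (hΦ : IsRootSystem Φ) (hB : IsBase Φ Δ c) (hα : α ∈ Δ)
    {μ : E} (hμΦ : μ ∈ Φ) (hμ1 : c μ α = 1)
    (hmax : ∀ γ ∈ Φ, c γ α = 1 → rootLe Φ Δ c γ μ)
    {l : E} (hl : l ∈ Φ) (hl1 : c l α = 1)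
    (hanti : ∀ a ∈ Δ, a ≠ α → ⟪l, a⟫ ≤ 0) (hlen : ‖l‖ = ‖μ‖) : l = α := by
  have hαΦ : α ∈ Φ := hB.subset hα
  have hcαα : c α α = 1 := by rw [simple_coords hB hα α hα]; simp
  have hαμ : ‖α‖ ≤ ‖μ‖ := length_le hΦ hB hα hμΦ hμ1 hmax hαΦ hcαα
  have hd : l - α = ∑ b ∈ Δ, (c l b - c α b) • b := sub_repr hB hαΦ hl
  have hpair : ⟪l, l - α⟫ ≤ 0 := by
    rw [hd, inner_sum]
    apply Finset.sum_nonpos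
    intro b hb
    rw [real_inner_smul_right]
    by_cases hbα : b = α
    · subst hbα; rw [hl1, hcαα]; simp
    · have h1 : c α b = 0 := by
        rw [simple_coords hB hα b hb]; simp [hbα]
      have h2 : 0 ≤ c l b := slice_coords_nonneg hB hα hl hl1 b hb
      rw [h1, sub_zero]
      exact mul_nonpos_of_nonneg_of_nonpos h2 (hanti b hb hbα)
  have hll : ⟪l, l⟫ = ‖l‖^2 := real_inner_self_eq_norm_sq l
  have hineq : ‖l‖^2 ≤ ⟪l, α⟫ := by
    rw [inner_sub_right] at hpair
    linarith [hpair, hll]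
  have hcs : ⟪l, α⟫ ≤ ‖l‖ * ‖α‖ := real_inner_le_norm l α
  have hlpos : 0 < ‖l‖ := norm_pos_iff.mpr (hΦ.nonzero l hl)
  have hαl : ‖α‖ ≤ ‖l‖ := by rw [hlen]; exact hαμ
  have hnormeq : ‖l‖ = ‖α‖ := by nlinarith
  have hinner : ⟪l, α⟫ = ‖l‖^2 := by nlinarith
  have hz : ⟪l - α, l - α⟫ = 0 := by
    rw [inner_sub_left, inner_sub_right, inner_sub_right]
    rw [real_inner_self_eq_norm_sq, real_inner_self_eq_norm_sq, real_inner_comm l α, hinner]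
    rw [← hnormeq]
    ring
  have := inner_self_eq_zero.mp hz
  rwa [sub_eq_zero] at this

lemma alpha_mu_len (hΦ : IsRootSystem Φ) (hB : IsBase Φ Δ c) (hα : α ∈ Δ)
    {μ : E} (hμΦ : μ ∈ Φ) (hμ1 : c μ α = 1)
    (hmax : ∀ γ ∈ Φ, c γ α = 1 → rootLe Φ Δ c γ μ) : ‖α‖ = ‖μ‖ := by
  obtain ⟨l, hl, hl1, -, hn, hd⟩ := climb_anti hΦ hB hα (fun _ => True)
    (fun _ _ _ _ _ _ _ => trivial)
    ((Φ.filter (fun δ => (∑ b ∈ Δ, c δ b) < ∑ b ∈ Δ, c μ b)).card + 1)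
    μ hμΦ hμ1 trivial (Nat.lt_succ_self _)
  have := anti_eq_alpha hΦ hB hα hμΦ hμ1 hmax hl hl1 hd hn
  rw [← this, hn]

lemma mixed_contra (hΦ : IsRootSystem Φ) (hB : IsBase Φ Δ c) {y a : E}
    (hy : y ∈ Φ) (ha : a ∈ Δ)
    (hcy : ∀ b ∈ Δ, 0 ≤ c y b) (hya : c y a = 1)
    (horth : ∀ b ∈ Δ, b ≠ a → c y b ≠ 0 → ⟪b, a⟫ = 0)
    {b1 : E} (hb1 : b1 ∈ Δ) (hb1a : b1 ≠ a) (hb1y : c y b1 ≠ 0) : False := by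
  have haa : (0:ℝ) < ⟪a,a⟫ := inner_self_pos' hΦ (hB.subset ha)
  have hip : ⟪y, a⟫ = ⟪a, a⟫ := by
    rw [real_inner_comm a y, inner_repr hB hy a]
    rw [Finset.sum_eq_single a]
    · rw [hya, one_mul]
    · intro b hb hne
      by_cases h0 : c y b = 0
      · rw [h0, zero_mul]
      · rw [real_inner_comm b a, horth b hb hne h0, mul_zero]
    · intro h; exact absurd ha h
  have hk : 2*⟪y,a⟫/⟪a,a⟫ = 2 := by
    rw [hip, mul_div_assoc, div_self (ne_of_gt haa), mul_one]
  have hw : y - (2*⟪y,a⟫/⟪a,a⟫) • a ∈ Φ := hΦ.reflect a (hB.subset ha) y hy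
  have hco := reflect_coords hΦ hB hy ha
  have hcwa : c (y - (2*⟪y,a⟫/⟪a,a⟫) • a) a = -1 := by
    rw [hco a ha, hya, if_pos rfl, hk]; norm_num
  have hcwb1 : c (y - (2*⟪y,a⟫/⟪a,a⟫) • a) b1 = c y b1 := by
    rw [hco b1 hb1]; simp [hb1a]
  have hb1pos : 0 < c y b1 := lt_of_le_of_ne (hcy b1 hb1) (Ne.symm hb1y)
  rcases hB.sign _ hw with hs | hs
  · have := hs a ha; rw [hcwa] at this; linarith
  · have := hs b1 hb1; rw [hcwb1] at this; linarith

lemma supp_split (hΦ : IsRootSystem Φ) (hB : IsBase Φ Δ c) (p : E → Prop)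
    (hp : ∀ a ∈ Δ, ∀ b ∈ Δ, p a → ¬ p b → ⟪a, b⟫ = 0) :
    ∀ n : ℕ, ∀ y ∈ Φ, (∀ a ∈ Δ, 0 ≤ c y a) →
      (Φ.filter (fun δ => (∑ b ∈ Δ, c δ b) < ∑ b ∈ Δ, c y b)).card < n →
      (∀ b ∈ Δ, ¬ p b → c y b = 0) ∨ (∀ b ∈ Δ, p b → c y b = 0) := by
  intro n
  induction n with
  | zero => intro y _ _ h; omega
  | succ n ih =>
    intro y hy hcy hcard
    by_cases hL : ∀ b ∈ Δ, ¬ p b → c y b = 0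
    · exact Or.inl hL
    by_cases hR : ∀ b ∈ Δ, p b → c y b = 0
    · exact Or.inr hR
    push_neg at hL hR
    obtain ⟨b1, hb1, hpb1, hyb1⟩ := hL
    obtain ⟨a1, ha1, hpa1, hya1⟩ := hR
    have hfind : ∃ a ∈ Δ, 0 < c y a ∧ 0 < ⟪y, a⟫ := by
      by_contra hcon
      push_neg at hcon
      have h0 : ⟪y, y⟫ ≤ 0 := by
        rw [inner_repr hB hy y]
        apply Finset.sum_nonpos
        intro b hb
        rcases eq_or_lt_of_le (hcy b hb) with h | h
        · rw [← h, zero_mul]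
        · exact mul_nonpos_of_nonneg_of_nonpos (le_of_lt h) (hcon b hb h)
      linarith [inner_self_pos' hΦ hy]
    obtain ⟨a, ha, hya, hipa⟩ := hfind
    have hb1a1 : b1 ≠ a1 := fun h => hpb1 (h ▸ hpa1)
    have hyne : y ≠ a := by
      intro h
      have e1 : c y b1 = if b1 = a then 1 else 0 := by rw [h]; exact simple_coords hB ha b1 hb1
      have e2 : c y a1 = if a1 = a then 1 else 0 := by rw [h]; exact simple_coords hB ha a1 ha1
      by_cases hb : b1 = a
      · by_cases hA : a1 = a
        · exact hb1a1 (hb.trans hA.symm)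
        · rw [e2] at hya1; simp [hA] at hya1
      · rw [e1] at hyb1; simp [hb] at hyb1
    have haΦ := hB.subset ha
    have hz : y - a ∈ Φ := by
      have h1 : ⟪y, -a⟫ < 0 := by rw [inner_neg_right]; linarith
      have h2 : y ≠ -(-a) := by rwa [neg_neg]
      have := root_add hΦ hy (neg_mem hΦ haΦ) h1 h2
      rwa [← sub_eq_add_neg] at this
    have hzco : ∀ b ∈ Δ, c (y - a) b = c y b - (if b = a then 1 else 0) := by
      apply coords_eq hB hz
      calc y - a = (∑ b ∈ Δ, c y b • b) - ∑ b ∈ Δ, (if b = a then (1:ℝ) else 0) • b := by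
            rw [← hB.repr y hy, indicator_sum ha 1, one_smul]
        _ = _ := by simp [sub_smul, Finset.sum_sub_distrib]
    have hcya1' : (1:ℝ) ≤ c y a := by
      obtain ⟨k, hk⟩ := hB.int y hy a ha
      rw [hk] at hya ⊢
      have hk0 : (0:ℤ) < k := by exact_mod_cast hya
      exact_mod_cast hk0
    have hzcy : ∀ b ∈ Δ, 0 ≤ c (y - a) b := by
      intro b hb; rw [hzco b hb]
      by_cases hba : b = a
      · subst hba; simp; linarith
      · simp [hba]; exact hcy b hb
    have hht : (∑ b ∈ Δ, c (y - a) b) = (∑ b ∈ Δ, c y b) - 1 := by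
      rw [Finset.sum_congr rfl (fun b hb => hzco b hb), Finset.sum_sub_distrib]
      simp [Finset.sum_ite_eq' Δ a, ha]
    have hhlt : (∑ b ∈ Δ, c (y - a) b) < ∑ b ∈ Δ, c y b := by rw [hht]; linarith
    have hsub : Φ.filter (fun δ => (∑ b ∈ Δ, c δ b) < ∑ b ∈ Δ, c (y - a) b)
        ⊂ Φ.filter (fun δ => (∑ b ∈ Δ, c δ b) < ∑ b ∈ Δ, c y b) := by
      rw [Finset.ssubset_def]
      constructor
      · intro δ hδ
        rw [Finset.mem_filter] at *
        exact ⟨hδ.1, lt_trans hδ.2 hhlt⟩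
      · intro hsup
        have hmem : y - a ∈ Φ.filter (fun δ => (∑ b ∈ Δ, c δ b) < ∑ b ∈ Δ, c y b) :=
          Finset.mem_filter.mpr ⟨hz, hhlt⟩
        have h2 := hsup hmem
        rw [Finset.mem_filter] at h2
        exact lt_irrefl _ h2.2
    have hcard' := Finset.card_lt_card hsub
    rcases ih (y - a) hz hzcy (by omega) with hzL | hzR
    · by_cases hpa : p a
      · left
        intro b hb hpb
        have hzb := hzL b hb hpb
        rw [hzco b hb] at hzb
        have hba : b ≠ a := fun h => hpb (h ▸ hpa)
        simpa [hba] using hzb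
      · exfalso
        have hza := hzL a ha hpa
        rw [hzco a ha] at hza
        simp at hza
        replace hza : c y a = 1 := by linarith
        have horth : ∀ b ∈ Δ, b ≠ a → c y b ≠ 0 → ⟪b, a⟫ = 0 := by
          intro b hb hba hcb
          by_cases hpb : p b
          · exact hp b hb a ha hpb hpa
          · exfalso
            have := hzL b hb hpb
            rw [hzco b hb] at this
            simp [hba] at this
            exact hcb this
        have ha1a : a1 ≠ a := fun h => hpa (h ▸ hpa1)
        exact mixed_contra hΦ hB hy ha hcy hza horth ha1 ha1a hya1
    · by_cases hpa : p a
      · exfalso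
        have hza := hzR a ha hpa
        rw [hzco a ha] at hza
        simp at hza
        replace hza : c y a = 1 := by linarith
        have horth : ∀ b ∈ Δ, b ≠ a → c y b ≠ 0 → ⟪b, a⟫ = 0 := by
          intro b hb hba hcb
          by_cases hpb : p b
          · exfalso
            have := hzR b hb hpb
            rw [hzco b hb] at this
            simp [hba] at this
            exact hcb this
          · rw [real_inner_comm]
            exact hp a ha b hb hpa hpb
        have hb1a : b1 ≠ a := fun h => hpb1 (h ▸ hpa)
        exact mixed_contra hΦ hB hy ha hcy hza horth hb1 hb1a hyb1
      · right
        intro b hb hpb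
        have hzb := hzR b hb hpb
        rw [hzco b hb] at hzb
        have hba : b ≠ a := fun h => hpa (h ▸ hpb)
        simpa [hba] using hzb

lemma supp_split' (hΦ : IsRootSystem Φ) (hB : IsBase Φ Δ c) (p : E → Prop)
    (hp : ∀ a ∈ Δ, ∀ b ∈ Δ, p a → ¬ p b → ⟪a, b⟫ = 0) :
    ∀ y ∈ Φ, (∀ b ∈ Δ, ¬ p b → c y b = 0) ∨ (∀ b ∈ Δ, p b → c y b = 0) := by
  intro y hy
  rcases hB.sign y hy with hs | hs
  · exact supp_split hΦ hB p hp
      ((Φ.filter (fun δ => (∑ b ∈ Δ, c δ b) < ∑ b ∈ Δ, c y b)).card + 1)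
      y hy hs (Nat.lt_succ_self _)
  · have hneg := neg_mem hΦ hy
    have hco := neg_coords hΦ hB hy
    have hnn : ∀ b ∈ Δ, 0 ≤ c (-y) b := by
      intro b hb; rw [hco b hb]; linarith [hs b hb]
    rcases supp_split hΦ hB p hp
        ((Φ.filter (fun δ => (∑ b ∈ Δ, c δ b) < ∑ b ∈ Δ, c (-y) b)).card + 1)
        (-y) hneg hnn (Nat.lt_succ_self _) with h | h
    · left
      intro b hb hpb
      have := h b hb hpb
      rw [hco b hb] at this
      linarith
    · right
      intro b hb hpb
      have := h b hb hpb
      rw [hco b hb] at this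
      linarith
end Stmt17Aux

/-- The simple root `α` and the maximum `μ` of `Φ_{α,1}` have the same length, which is
maximal in `Φ_{α,1}`; moreover every `γ ∈ Φ_{α,1}` of this maximal length is
non-orthogonal to every irreducible component `Ψ` of the parabolic subsystem
`Φ⟨Π \ {α}⟩`. -/
theorem stmt17 (Φ Δ : Finset E) (c : E → E → ℝ)
    (hΦ : IsRootSystem Φ) (hB : IsBase Φ Δ c) (hirr : IsIrredSys Φ)
    (α : E) (hα : α ∈ Δ)
    (μ : E) (hμ : (μ ∈ Φ ∧ c μ α = 1) ∧
      ∀ γ ∈ Φ, c γ α = 1 → rootLe Φ Δ c γ μ) :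
    ‖α‖ = ‖μ‖ ∧
    (∀ δ ∈ Φ, c δ α = 1 → ‖δ‖ ≤ ‖μ‖) ∧
    (∀ Ψ : Set E, Ψ.Nonempty → Ψ ⊆ {δ : E | δ ∈ Φ ∧ c δ α = 0} →
      (∀ x ∈ Ψ, ∀ y ∈ {δ : E | δ ∈ Φ ∧ c δ α = 0} \ Ψ, ⟪x, y⟫ = 0) →
      IsIrredSet Ψ →
      ∀ γ ∈ Φ, c γ α = 1 → ‖γ‖ = ‖μ‖ → ¬(∀ δ ∈ Ψ, ⟪γ, δ⟫ = 0)) := by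
  open Stmt17Aux in
  obtain ⟨⟨hμΦ, hμ1⟩, hmax⟩ := hμ
  have hαΦ : α ∈ Φ := hB.subset hα
  refine ⟨alpha_mu_len hΦ hB hα hμΦ hμ1 hmax,
    fun δ hδ hδ1 => length_le hΦ hB hα hμΦ hμ1 hmax hδ hδ1, ?_⟩
  intro Ψ hne hsub hsplit _hirrΨ γ hγ hγ1 hγlen hQγ
  have hQstep : ∀ x ∈ Φ, c x α = 1 → ∀ a ∈ Δ, a ≠ α →
      (∀ δ ∈ Ψ, ⟪x, δ⟫ = 0) → (∀ δ ∈ Ψ, ⟪x - (2*⟪x,a⟫/⟪a,a⟫) • a, δ⟫ = 0) := by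
    intro x hx _hx1 a ha hane hQx δ hδ
    rw [inner_sub_left, real_inner_smul_left, hQx δ hδ]
    by_cases haΨ : a ∈ Ψ
    · rw [hQx a haΨ]
      simp
    · have hαa : ¬ (α = a) := fun h => hane h.symm
      have hcaα : c a α = 0 := by
        rw [simple_coords hB ha α hα]
        simp [hαa]
      have haJ : a ∈ ({δ : E | δ ∈ Φ ∧ c δ α = 0} : Set E) \ Ψ :=
        ⟨⟨hB.subset ha, hcaα⟩, haΨ⟩
      have h0 := hsplit δ hδ a haJ
      rw [real_inner_comm a δ] at h0
      rw [h0]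
      simp
  obtain ⟨y, hy, hy1, hQy, hylen, hydom⟩ := climb_dom hΦ hB hα
    (fun x => ∀ δ ∈ Ψ, ⟪x, δ⟫ = 0) hQstep
    ((Φ.filter (fun δ => (∑ b ∈ Δ, c γ b) < ∑ b ∈ Δ, c δ b)).card + 1)
    γ hγ hγ1 hQγ (Nat.lt_succ_self _)
  have hymu : y = μ := (dominant_le hΦ hB hα hμΦ hμ1 hmax hy hy1 hydom).2
    (by rw [hylen, hγlen])
  have hQμ : ∀ δ ∈ Ψ, ⟪μ, δ⟫ = 0 := hymu ▸ hQy
  obtain ⟨l, hl, hl1, hQl, hllen, hlanti⟩ := climb_anti hΦ hB hα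
    (fun x => ∀ δ ∈ Ψ, ⟪x, δ⟫ = 0) hQstep
    ((Φ.filter (fun δ => (∑ b ∈ Δ, c δ b) < ∑ b ∈ Δ, c μ b)).card + 1)
    μ hμΦ hμ1 hQμ (Nat.lt_succ_self _)
  have hlα : l = α := anti_eq_alpha hΦ hB hα hμΦ hμ1 hmax hl hl1 hlanti hllen
  have hQα : ∀ δ ∈ Ψ, ⟪α, δ⟫ = 0 := hlα ▸ hQl
  have hαΨ : α ∉ Ψ := by
    intro h
    exact (hΦ.nonzero α hαΦ) (inner_self_eq_zero.mp (hQα α h))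
  have hp : ∀ a ∈ Δ, ∀ b ∈ Δ, a ∈ Ψ → b ∉ Ψ → ⟪a, b⟫ = 0 := by
    intro a ha b hb haΨ hbΨ
    by_cases hbα : b = α
    · rw [hbα, real_inner_comm]
      exact hQα a haΨ
    · have hαb : ¬ (α = b) := fun h => hbα h.symm
      have hcbα : c b α = 0 := by
        rw [simple_coords hB hb α hα]
        simp [hαb]
      exact hsplit a haΨ b ⟨⟨hB.subset hb, hcbα⟩, hbΨ⟩
  obtain ⟨δ0, hδ0⟩ := hne
  obtain ⟨hδ0Φ, hδ0α⟩ := hsub hδ0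
  obtain ⟨a0, ha0, ha0Ψ⟩ : ∃ a ∈ Δ, a ∈ Ψ := by
    by_contra hcon
    push_neg at hcon
    have hz : ⟪δ0, δ0⟫ = 0 := by
      rw [inner_repr hB hδ0Φ δ0]
      apply Finset.sum_eq_zero
      intro b hb
      have hbΨ := hcon b hb
      have hb0 : ⟪δ0, b⟫ = 0 := by
        by_cases hbα : b = α
        · rw [hbα, real_inner_comm α δ0]
          exact hQα δ0 hδ0
        · have hαb : ¬ (α = b) := fun h => hbα h.symm
          have hcbα : c b α = 0 := by
            rw [simple_coords hB hb α hα]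
            simp [hαb]
          exact hsplit δ0 hδ0 b ⟨⟨hB.subset hb, hcbα⟩, hbΨ⟩
      rw [hb0, mul_zero]
    exact (hΦ.nonzero δ0 hδ0Φ) (inner_self_eq_zero.mp hz)
  set s : Set E := {x | x ∈ Φ ∧ ∀ b ∈ Δ, b ∉ Ψ → c x b = 0} with hsdef
  have hssub : s ⊆ (Φ : Set E) := fun x hx => hx.1
  have hsorth : ∀ x ∈ s, ∀ z ∈ (Φ : Set E) \ s, ⟪x, z⟫ = 0 := by
    intro x hx z hz
    obtain ⟨hzΦ', hzs⟩ := hz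
    have hzΦ : z ∈ Φ := hzΦ'
    have hzsupp : ∀ b ∈ Δ, b ∈ Ψ → c z b = 0 := by
      rcases supp_split' hΦ hB (· ∈ Ψ) hp z hzΦ with h | h
      · exact absurd (show z ∈ s from ⟨hzΦ, h⟩) hzs
      · exact h
    rw [inner_repr hB hzΦ x]
    apply Finset.sum_eq_zero
    intro b hb
    by_cases hbΨ : b ∈ Ψ
    · rw [hzsupp b hb hbΨ, zero_mul]
    · have hxb : ⟪x, b⟫ = 0 := by
        rw [real_inner_comm b x, inner_repr hB hx.1 b]
        apply Finset.sum_eq_zero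
        intro a' ha'
        by_cases ha'Ψ : a' ∈ Ψ
        · rw [real_inner_comm a' b, hp a' ha' b hb ha'Ψ hbΨ, mul_zero]
        · rw [hx.2 a' ha' ha'Ψ, zero_mul]
      rw [hxb, mul_zero]
  rcases hirr s hssub hsorth with h | h
  · have ha0s : a0 ∈ s := by
      refine ⟨hB.subset ha0, ?_⟩
      intro b hb hbΨ
      rw [simple_coords hB ha0 b hb]
      have hba0 : ¬ (b = a0) := fun h' => hbΨ (h' ▸ ha0Ψ)
      simp [hba0]
    rw [h] at ha0s
    exact ha0s
  · have hαs : α ∉ s := by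
      intro hs'
      have h1 := hs'.2 α hα hαΨ
      have h2 : c α α = 1 := by rw [simple_coords hB hα α hα]; simp
      rw [h1] at h2
      norm_num at h2
    rw [h] at hαs
    exact hαs hαΦ
end

section
/- Let Φ be irreducible with highest root θ = Σ_{α∈Π} m_α α. For α ∈ Π, the coefficient m_α equals 1 if and only if −θ together with Π\{α} forms a simple system of Φ whose Dynkin diagram equals the subdiagram of the extended Dynkin diagram of Φ on the vertex set (Π ∪ {α₀}) \ {α}. -/
open scoped RealInnerProductSpace
attribute [local instance] Classical.propDecidable

variable {E : Type*} [NormedAddCommGroup E] [InnerProductSpace ℝ E] [FiniteDimensional ℝ E]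

/-- `B` is a simple system of the (sub)system `Ψ`: a linearly independent subset such
that every element of `Ψ` is an integral linear combination of `B` with coefficients
all nonnegative or all nonpositive. -/
def IsSimpleSystem (Ψ : Set E) (B : Finset E) : Prop :=
  (B : Set E) ⊆ Ψ ∧ LinearIndependent ℝ (fun x : (B : Set E) => (x : E)) ∧
    ∀ γ ∈ Ψ, ∃ f : E → ℤ, γ = ∑ b ∈ B, (f b : ℝ) • b ∧
      ((∀ b ∈ B, 0 ≤ f b) ∨ (∀ b ∈ B, f b ≤ 0))

private lemma coords_zero {Δ : Finset E}
    (h : LinearIndependent ℝ (fun x : (Δ : Set E) => (x : E)))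
    {f : E → ℝ} (hf : ∑ a ∈ Δ, f a • a = 0) : ∀ a ∈ Δ, f a = 0 := by
  rw [Fintype.linearIndependent_iff] at h
  intro a ha
  exact h (fun x => f x)
    ((Finset.sum_finset_coe (fun a => f a • a) Δ).trans hf) ⟨a, ha⟩

private lemma indep_of_coords {s : Finset E}
    (h : ∀ f : E → ℝ, (∑ a ∈ s, f a • a) = 0 → ∀ a ∈ s, f a = 0) :
    LinearIndependent ℝ (fun x : (s : Set E) => (x : E)) := by
  rw [Fintype.linearIndependent_iff]
  intro g hg i
  have hsum : ∑ a ∈ s, (fun x => if hx : x ∈ s then g ⟨x, hx⟩ else 0) a • a = 0 := by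
    rw [show (∑ a ∈ s, (fun x => if hx : x ∈ s then g ⟨x, hx⟩ else 0) a • a)
      = ∑ i : (s : Set E), (if hx : (i:E) ∈ s then g ⟨i, hx⟩ else 0) • (i:E) from
        (Finset.sum_finset_coe (fun a => (if hx : a ∈ s then g ⟨a, hx⟩ else 0) • a) s).symm,
      ← hg]
    refine Finset.sum_congr rfl fun i _ => ?_
    simp only [Finset.mem_coe.mp i.2, dif_pos]
  have := h _ hsum i (Finset.mem_coe.mp i.2)
  simpa [Finset.mem_coe.mp i.2] using this

private noncomputable def zc (r : ℝ) : ℤ :=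
  if h : ∃ k : ℤ, r = (k : ℝ) then h.choose else 0

private lemma zc_spec {r : ℝ} (h : ∃ k : ℤ, r = (k : ℝ)) : ((zc r : ℤ) : ℝ) = r := by
  rw [zc, dif_pos h]; exact h.choose_spec.symm

/-- For the highest root `θ = Σ m_a a`, the coefficient `m_α` equals `1` iff
`{-θ} ∪ (Π \ {α})` is a simple system of `Φ` (whose Dynkin diagram is then literally
the subdiagram of the extended Dynkin diagram, with affine vertex `α₀ = -θ`, obtained
by deleting the vertex `α`). -/
theorem stmt19 (Φ Δ : Finset E) (c : E → E → ℝ)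
    (hΦ : IsRootSystem Φ) (hB : IsBase Φ Δ c) (hirr : IsIrredSys Φ)
    (θ : E) (hθ : θ ∈ Φ ∧ ∀ γ ∈ Φ, ∀ a ∈ Δ, c γ a ≤ c θ a)
    (α : E) (hα : α ∈ Δ) :
    c θ α = 1 ↔ IsSimpleSystem (Φ : Set E) (insert (-θ) (Δ.erase α)) := by
  obtain ⟨hθΦ, hhigh⟩ := hθ
  have hΔΦ := hB.subset
  -- uniqueness of coordinates
  have huniq : ∀ f g : E → ℝ, (∑ a ∈ Δ, f a • a) = ∑ a ∈ Δ, g a • a →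
      ∀ a ∈ Δ, f a = g a := by
    intro f g hfg a ha
    have h0 : ∑ a ∈ Δ, (f a - g a) • a = 0 := by
      rw [Finset.sum_congr rfl fun x _ => sub_smul (f x) (g x) x,
        Finset.sum_sub_distrib, hfg, sub_self]
    have := coords_zero hB.indep h0 a ha
    linarith
  have hind1 : ∀ b ∈ Δ, (∑ a ∈ Δ, (if a = b then (1:ℝ) else 0) • a) = b := by
    intro b hb
    simp [ite_smul, Finset.sum_ite_eq', hb]
  have hcself : ∀ a ∈ Δ, ∀ b ∈ Δ, c a b = if b = a then 1 else 0 := by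
    intro a ha b hb
    exact huniq _ _ ((hB.repr a (hΔΦ ha)).symm.trans (hind1 a ha).symm) b hb
  have hm1 : ∀ a ∈ Δ, 1 ≤ c θ a := by
    intro a ha
    have h := hhigh a (hΔΦ ha) a ha
    rw [hcself a ha a ha, if_pos rfl] at h
    exact h
  have hneg : ∀ γ ∈ Φ, -γ ∈ Φ := by
    intro γ hγ
    have h0 := hΦ.reflect γ hγ γ hγ
    have hγ0 : ⟪γ, γ⟫ ≠ 0 := inner_self_ne_zero.mpr (hΦ.nonzero γ hγ)
    have h2 : 2 * ⟪γ, γ⟫ / ⟪γ, γ⟫ = (2:ℝ) := by field_simp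
    rw [h2] at h0
    have : γ - (2:ℝ) • γ = -γ := by module
    rwa [this] at h0
  have hnegc : ∀ γ ∈ Φ, ∀ a ∈ Δ, c (-γ) a = - c γ a := by
    intro γ hγ a ha
    refine huniq (fun b => c (-γ) b) (fun b => - c γ b) ?_ a ha
    rw [← hB.repr (-γ) (hneg γ hγ)]
    have : (∑ b ∈ Δ, (- c γ b) • b) = -(∑ b ∈ Δ, c γ b • b) := by
      rw [← Finset.sum_neg_distrib]
      exact Finset.sum_congr rfl fun b _ => neg_smul _ _
    rw [this, ← hB.repr γ hγ]
  have hlow : ∀ γ ∈ Φ, ∀ a ∈ Δ, -c θ a ≤ c γ a := by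
    intro γ hγ a ha
    have h := hhigh (-γ) (hneg γ hγ) a ha
    rw [hnegc γ hγ a ha] at h
    linarith
  have hθne : -θ ∉ Δ := by
    intro hm
    have h1 := hcself (-θ) hm (-θ) hm
    rw [if_pos rfl] at h1
    have h2 := hnegc θ hθΦ (-θ) hm
    have h3 := hm1 (-θ) hm
    linarith [h2 ▸ h1]
  have hθerase : -θ ∉ Δ.erase α := fun h => hθne (Finset.mem_of_mem_erase h)
  have hθcast : ∀ a ∈ Δ, ((zc (c θ a) : ℤ) : ℝ) = c θ a := fun a ha =>
    zc_spec (hB.int θ hθΦ a ha)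
  constructor
  · -- forward
    intro h1
    refine ⟨?_, ?_, ?_⟩
    · intro x hx
      rcases Finset.mem_insert.mp (Finset.mem_coe.mp hx) with rfl | hx'
      · exact Finset.mem_coe.mpr (hneg θ hθΦ)
      · exact Finset.mem_coe.mpr (hΔΦ (Finset.mem_of_mem_erase hx'))
    · -- linear independence
      apply indep_of_coords
      intro f hf
      rw [Finset.sum_insert hθerase] at hf
      have hgsum : ∑ a ∈ Δ, ((if a = α then (0:ℝ) else f a) - f (-θ) * c θ a) • a = 0 := by
        have e1 : ∑ a ∈ Δ, ((if a = α then (0:ℝ) else f a) - f (-θ) * c θ a) • a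
            = (∑ a ∈ Δ, (if a = α then (0:ℝ) else f a) • a)
              - f (-θ) • (∑ a ∈ Δ, c θ a • a) := by
          rw [Finset.smul_sum, ← Finset.sum_sub_distrib]
          exact Finset.sum_congr rfl fun a _ => by rw [sub_smul, smul_smul]
        have e2 : ∑ a ∈ Δ, (if a = α then (0:ℝ) else f a) • a
            = ∑ a ∈ Δ.erase α, f a • a := by
          rw [← Finset.add_sum_erase Δ _ hα, if_pos rfl, zero_smul, zero_add]
          exact Finset.sum_congr rfl fun a ha => by
            rw [if_neg (Finset.ne_of_mem_erase ha)]
        rw [e1, e2, ← hB.repr θ hθΦ,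
          show f (-θ) • θ = -(f (-θ) • (-θ)) by rw [smul_neg, neg_neg],
          sub_neg_eq_add, add_comm]
        exact hf
      have hz := coords_zero hB.indep hgsum
      have hzα := hz α hα
      rw [if_pos rfl] at hzα
      have hfθ : f (-θ) = 0 := by
        have hmul : f (-θ) * c θ α = 0 := by linarith
        rcases mul_eq_zero.mp hmul with h | h
        · exact h
        · linarith [hm1 α hα]
      intro b hb
      rcases Finset.mem_insert.mp hb with rfl | hb'
      · exact hfθ
      · have := hz b (Finset.mem_of_mem_erase hb')
        rw [if_neg (Finset.ne_of_mem_erase hb'), hfθ, zero_mul, sub_zero] at this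
        exact this
    · -- representation + sign
      intro γ hγ
      have hγΦ : γ ∈ Φ := Finset.mem_coe.mp hγ
      have hγα : ((zc (c γ α) : ℤ) : ℝ) = c γ α := zc_spec (hB.int γ hγΦ α hα)
      have hγcast : ∀ a ∈ Δ, ((zc (c γ a) : ℤ) : ℝ) = c γ a := fun a ha =>
        zc_spec (hB.int γ hγΦ a ha)
      refine ⟨fun x => if x = -θ then -(zc (c γ α))
        else zc (c γ x) - zc (c γ α) * zc (c θ x), ?_, ?_⟩
      · -- γ equals the combination
        have key : γ = (-(c γ α)) • (-θ)
            + ∑ a ∈ Δ.erase α, (c γ a - c γ α * c θ a) • a := by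
          have hγr := hB.repr γ hγΦ
          have hθr := hB.repr θ hθΦ
          rw [← Finset.add_sum_erase Δ _ hα] at hγr hθr
          rw [h1] at hθr
          have hstep : c γ α • ∑ a ∈ Δ.erase α, c θ a • a
              + ∑ a ∈ Δ.erase α, (c γ a - c γ α * c θ a) • a
              = ∑ a ∈ Δ.erase α, c γ a • a := by
            rw [Finset.smul_sum, ← Finset.sum_add_distrib]
            refine Finset.sum_congr rfl fun a _ => ?_
            rw [smul_smul, ← add_smul]
            ring_nf
          calc γ = c γ α • α + ∑ a ∈ Δ.erase α, c γ a • a := hγr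
            _ = c γ α • ((1:ℝ) • α + ∑ a ∈ Δ.erase α, c θ a • a)
                + ∑ a ∈ Δ.erase α, (c γ a - c γ α * c θ a) • a := by
                rw [smul_add, add_assoc, hstep, smul_smul, mul_one]
            _ = (-(c γ α)) • (-θ) + ∑ a ∈ Δ.erase α, (c γ a - c γ α * c θ a) • a := by
                rw [← hθr, neg_smul, smul_neg, neg_neg]
        refine key.trans ?_
        rw [Finset.sum_insert hθerase]
        beta_reduce
        rw [if_pos rfl]
        congr 1
        · push_cast
          rw [hγα]
        · refine Finset.sum_congr rfl fun a ha => ?_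
          have haΔ := Finset.mem_of_mem_erase ha
          have hane : a ≠ -θ := fun h => hθne (h ▸ haΔ)
          rw [if_neg hane]
          push_cast
          rw [hγcast a haΔ, hθcast a haΔ, hγα]
      · -- sign condition
        rcases hB.sign γ hγΦ with hpos | hneg'
        · have h0 : 0 ≤ zc (c γ α) := by
            have : (0:ℝ) ≤ ((zc (c γ α) : ℤ) : ℝ) := by rw [hγα]; exact hpos α hα
            exact_mod_cast this
          rcases eq_or_lt_of_le h0 with heq | hlt
          · left
            intro b hb
            rcases Finset.mem_insert.mp hb with rfl | hb'
            · beta_reduce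
              rw [if_pos rfl, ← heq, neg_zero]
            · have hbΔ := Finset.mem_of_mem_erase hb'
              have hbne : b ≠ -θ := fun h => hθne (h ▸ hbΔ)
              beta_reduce
              rw [if_neg hbne, ← heq, zero_mul, sub_zero]
              have : (0:ℝ) ≤ ((zc (c γ b) : ℤ) : ℝ) := by
                rw [hγcast b hbΔ]; exact hpos b hbΔ
              exact_mod_cast this
          · right
            intro b hb
            rcases Finset.mem_insert.mp hb with rfl | hb'
            · beta_reduce
              rw [if_pos rfl]
              omega
            · have hbΔ := Finset.mem_of_mem_erase hb'
              have hbne : b ≠ -θ := fun h => hθne (h ▸ hbΔ)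
              beta_reduce
              rw [if_neg hbne]
              have hr : ((zc (c γ b) - zc (c γ α) * zc (c θ b) : ℤ) : ℝ) ≤ 0 := by
                push_cast
                rw [hγcast b hbΔ, hθcast b hbΔ, hγα]
                have ha1 : (1:ℝ) ≤ c γ α := by
                  have h' : 1 ≤ zc (c γ α) := by omega
                  have : (1:ℝ) ≤ ((zc (c γ α) : ℤ) : ℝ) := by exact_mod_cast h'
                  rw [hγα] at this
                  linarith
                have hb1 := hm1 b hbΔ
                have hb2 := hhigh γ hγΦ b hbΔ
                nlinarith
              exact_mod_cast hr
        · have h0 : zc (c γ α) ≤ 0 := by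
            have : ((zc (c γ α) : ℤ) : ℝ) ≤ 0 := by rw [hγα]; exact hneg' α hα
            exact_mod_cast this
          rcases eq_or_lt_of_le h0 with heq | hlt
          · right
            intro b hb
            rcases Finset.mem_insert.mp hb with rfl | hb'
            · beta_reduce
              rw [if_pos rfl, heq, neg_zero]
            · have hbΔ := Finset.mem_of_mem_erase hb'
              have hbne : b ≠ -θ := fun h => hθne (h ▸ hbΔ)
              beta_reduce
              rw [if_neg hbne, heq, zero_mul, sub_zero]
              have : ((zc (c γ b) : ℤ) : ℝ) ≤ 0 := by
                rw [hγcast b hbΔ]; exact hneg' b hbΔ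
              exact_mod_cast this
          · left
            intro b hb
            rcases Finset.mem_insert.mp hb with rfl | hb'
            · beta_reduce
              rw [if_pos rfl]
              omega
            · have hbΔ := Finset.mem_of_mem_erase hb'
              have hbne : b ≠ -θ := fun h => hθne (h ▸ hbΔ)
              beta_reduce
              rw [if_neg hbne]
              have hr : (0:ℝ) ≤ ((zc (c γ b) - zc (c γ α) * zc (c θ b) : ℤ) : ℝ) := by
                push_cast
                rw [hγcast b hbΔ, hθcast b hbΔ, hγα]
                have ha1 : c γ α ≤ (-1:ℝ) := by
                  have h' : zc (c γ α) ≤ -1 := by omega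
                  have : ((zc (c γ α) : ℤ) : ℝ) ≤ -1 := by exact_mod_cast h'
                  rw [hγα] at this
                  linarith
                have hb1 := hm1 b hbΔ
                have hb2 := hlow γ hγΦ b hbΔ
                nlinarith
              exact_mod_cast hr
  · -- reverse
    rintro ⟨hsub, hind, hrep⟩
    obtain ⟨f, hfr, hfs⟩ := hrep α (Finset.mem_coe.mpr (hΔΦ hα))
    rw [Finset.sum_insert hθerase] at hfr
    have hgsum : ∑ a ∈ Δ, ((if a = α then (1:ℝ) else 0) + (f (-θ) : ℝ) * c θ a
        - (if a = α then (0:ℝ) else (f a : ℝ))) • a = 0 := by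
      have e1 : ∑ a ∈ Δ, ((if a = α then (1:ℝ) else 0) + (f (-θ) : ℝ) * c θ a
          - (if a = α then (0:ℝ) else (f a : ℝ))) • a
          = ((∑ a ∈ Δ, (if a = α then (1:ℝ) else 0) • a)
              + (f (-θ) : ℝ) • (∑ a ∈ Δ, c θ a • a))
            - ∑ a ∈ Δ, (if a = α then (0:ℝ) else (f a : ℝ)) • a := by
        rw [Finset.smul_sum, ← Finset.sum_add_distrib, ← Finset.sum_sub_distrib]
        exact Finset.sum_congr rfl fun a _ => by rw [sub_smul, add_smul, smul_smul]
      have e2 : ∑ a ∈ Δ, (if a = α then (0:ℝ) else (f a : ℝ)) • a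
          = ∑ a ∈ Δ.erase α, (f a : ℝ) • a := by
        rw [← Finset.add_sum_erase Δ _ hα, if_pos rfl, zero_smul, zero_add]
        exact Finset.sum_congr rfl fun a ha => by
          rw [if_neg (Finset.ne_of_mem_erase ha)]
      rw [e1, e2, hind1 α hα, ← hB.repr θ hθΦ,
        show (f (-θ) : ℝ) • θ = -((f (-θ) : ℝ) • (-θ)) by rw [smul_neg, neg_neg]]
      nth_rewrite 1 [hfr]
      abel
    have hzα := coords_zero hB.indep hgsum α hα
    rw [if_pos rfl, if_pos rfl, sub_zero] at hzα
    -- 1 + f(-θ) * c θ α = 0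
    have hm : ((zc (c θ α) : ℤ) : ℝ) = c θ α := hθcast α hα
    have hm1' : 1 ≤ zc (c θ α) := by
      have : (1:ℝ) ≤ ((zc (c θ α) : ℤ) : ℝ) := by rw [hm]; exact hm1 α hα
      exact_mod_cast this
    have hz : (1 + f (-θ) * zc (c θ α) : ℤ) = 0 := by
      have : ((1 + f (-θ) * zc (c θ α) : ℤ) : ℝ) = 0 := by
        push_cast
        rw [hm]
        exact hzα
      exact_mod_cast this
    have hmul : f (-θ) * zc (c θ α) = -1 := by omega
    have hdvd : zc (c θ α) ∣ 1 := ⟨-(f (-θ)), by rw [mul_neg, mul_comm, hmul, neg_neg]⟩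
    have : zc (c θ α) = 1 := by
      have := Int.le_of_dvd one_pos hdvd
      omega
    rw [← hm, this]
    norm_num
end
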